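/- arXiv:2205.04949 — 7 statements merged into one kernel-verified Lean document; each statement's English description precedes it below -/
import Mathlib

section
/- Let K be ℝ or ℂ, let w > 1 be real, let (g,Γ) be a solution of the (1,w)-AlgDOP problem over K, and let Φ(x,y) = (αx+β, γy+p(x)) be a (1,w)-admissible change of variables (α,γ ∈ K∖{0}, β ∈ K, p ∈ K[x], deg p ≤ w). Then (Φ_*g, Γ∘Φ⁻¹) is also a solution of the (1,w)-AlgDOP problem over K. -/
open MvPolynomial

noncomputable section

abbrev Poly2 (K : Type*) [CommSemiring K] := MvPolynomial (Fin 2) K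

/-- `P` has `(w₁,w₂)`-weighted degree at most `D`. -/
def WDegLE {K : Type*} [CommSemiring K] (w₁ w₂ : ℝ) (P : Poly2 K) (D : ℝ) : Prop :=
  ∀ m ∈ P.support, w₁ * (m 0 : ℝ) + w₂ * (m 1 : ℝ) ≤ D

/-- `(g,Γ)` with `g = [[a,b],[b,c]]` is a solution of the `(w₁,w₂)`-AlgDOP problem. -/
def IsAlgDOP {K : Type*} [CommRing K] (w₁ w₂ : ℝ) (a b c Γ : Poly2 K) : Prop :=
  WDegLE w₁ w₂ a (2 * w₁) ∧ WDegLE w₁ w₂ b (w₁ + w₂) ∧ WDegLE w₁ w₂ c (2 * w₂) ∧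
  a * c - b ^ 2 ≠ 0 ∧ Squarefree Γ ∧ Γ ∣ (a * c - b ^ 2) ∧
  Γ ∣ (a * pderiv 0 Γ + b * pderiv 1 Γ) ∧
  Γ ∣ (b * pderiv 0 Γ + c * pderiv 1 Γ)

/-- A univariate polynomial regarded as a polynomial in the first variable `x`. -/
def toX {K : Type*} [CommSemiring K] (q : Polynomial K) : Poly2 K :=
  Polynomial.aeval (X 0) q

/-- A univariate polynomial regarded as a polynomial in the second variable `y`. -/
def toY {K : Type*} [CommSemiring K] (q : Polynomial K) : Poly2 K :=
  Polynomial.aeval (X 1) q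

/-- Substitution by the inverse of `Φ(x,y) = (αx+β, γy+p(x))`. -/
def phiInv {K : Type*} [Field K] (α β γ : K) (p : Polynomial K) : Poly2 K →ₐ[K] Poly2 K :=
  MvPolynomial.aeval (fun i : Fin 2 =>
    if i = 0 then C α⁻¹ * (X 0 - C β)
    else C γ⁻¹ * (X 1 - Polynomial.aeval (C α⁻¹ * (X 0 - C β) : Poly2 K) p))

/-- First entry of `Φ_* g`. -/
def pushA {K : Type*} [Field K] (α β γ : K) (p : Polynomial K) (a : Poly2 K) : Poly2 K :=
  phiInv α β γ p (C (α ^ 2) * a)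

/-- Off-diagonal entry of `Φ_* g`. -/
def pushB {K : Type*} [Field K] (α β γ : K) (p : Polynomial K) (a b : Poly2 K) : Poly2 K :=
  phiInv α β γ p (C α * (toX (Polynomial.derivative p) * a + C γ * b))

/-- Last entry of `Φ_* g`. -/
def pushC {K : Type*} [Field K] (α β γ : K) (p : Polynomial K) (a b c : Poly2 K) : Poly2 K :=
  phiInv α β γ p
    ((toX (Polynomial.derivative p)) ^ 2 * a
      + C (2 * γ) * (toX (Polynomial.derivative p) * b) + C (γ ^ 2) * c)

/-- If `(g,Γ)` is a solution of the `(1,w)`-AlgDOP problem over `K` and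
`Φ(x,y) = (αx+β, γy+p(x))` is a `(1,w)`-admissible change of variables
(`α,γ ≠ 0`, `deg p ≤ w`), then `(Φ_* g, Γ ∘ Φ⁻¹)` is also a solution. -/
def ChangeClaim (K : Type*) [Field K] : Prop :=
  ∀ (w : ℝ), 1 < w →
    ∀ (a b c Γ : Poly2 K) (α β γ : K) (p : Polynomial K),
      α ≠ 0 → γ ≠ 0 → (p.natDegree : ℝ) ≤ w →
      IsAlgDOP 1 w a b c Γ →
      IsAlgDOP 1 w (pushA α β γ p a) (pushB α β γ p a b) (pushC α β γ p a b c)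
        (phiInv α β γ p Γ)

/-! ### Auxiliary lemmas -/

namespace AlgDOPAux

variable {K : Type*} [Field K]

section WDeg

variable {w₁ w₂ D E : ℝ}

lemma wdegLE_mono {P : Poly2 K} (h : WDegLE w₁ w₂ P D) (hDE : D ≤ E) : WDegLE w₁ w₂ P E :=
  fun m hm => (h m hm).trans hDE

lemma wdegLE_zero : WDegLE w₁ w₂ (0 : Poly2 K) D := by
  intro m hm; simp at hm

lemma wdegLE_C (k : K) : WDegLE w₁ w₂ (C k : Poly2 K) 0 := by
  intro m hm
  have hm' : m = 0 := by
    by_contra h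
    rw [mem_support_iff, coeff_C, if_neg (fun h0 => h h0.symm)] at hm
    exact hm rfl
  simp [hm']

lemma wdegLE_one : WDegLE w₁ w₂ (1 : Poly2 K) 0 := by
  simpa using wdegLE_C (w₁ := w₁) (w₂ := w₂) (1 : K)

lemma wdegLE_add {P Q : Poly2 K} (hP : WDegLE w₁ w₂ P D) (hQ : WDegLE w₁ w₂ Q D) :
    WDegLE w₁ w₂ (P + Q) D := by
  intro m hm
  rcases Finset.mem_union.mp (MvPolynomial.support_add hm) with h | h
  · exact hP m h
  · exact hQ m h

lemma wdegLE_neg {P : Poly2 K} (hP : WDegLE w₁ w₂ P D) : WDegLE w₁ w₂ (-P) D := by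
  intro m hm
  apply hP
  rwa [mem_support_iff, coeff_neg, neg_ne_zero, ← mem_support_iff] at hm

lemma wdegLE_sub {P Q : Poly2 K} (hP : WDegLE w₁ w₂ P D) (hQ : WDegLE w₁ w₂ Q D) :
    WDegLE w₁ w₂ (P - Q) D := by
  rw [sub_eq_add_neg]; exact wdegLE_add hP (wdegLE_neg hQ)

lemma wdegLE_mul {P Q : Poly2 K} (hP : WDegLE w₁ w₂ P D) (hQ : WDegLE w₁ w₂ Q E) :
    WDegLE w₁ w₂ (P * Q) (D + E) := by
  intro m hm
  have hm' := MvPolynomial.support_mul P Q hm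
  rcases Finset.mem_add.mp hm' with ⟨m₁, hm₁, m₂, hm₂, rfl⟩
  have h1 := hP m₁ hm₁
  have h2 := hQ m₂ hm₂
  have e0 : ((m₁ + m₂) 0 : ℝ) = (m₁ 0 : ℝ) + (m₂ 0 : ℝ) := by
    simp [Finsupp.add_apply]
  have e1 : ((m₁ + m₂) 1 : ℝ) = (m₁ 1 : ℝ) + (m₂ 1 : ℝ) := by
    simp [Finsupp.add_apply]
  rw [e0, e1]; nlinarith [h1, h2]

lemma wdegLE_C_mul {P : Poly2 K} (k : K) (hP : WDegLE w₁ w₂ P D) :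
    WDegLE w₁ w₂ (C k * P) D := by
  simpa using wdegLE_mul (wdegLE_C k) hP

lemma wdegLE_smul {P : Poly2 K} (k : K) (hP : WDegLE w₁ w₂ P D) :
    WDegLE w₁ w₂ (k • P) D := by
  intro m hm
  exact hP m (MvPolynomial.support_smul hm)

lemma wdegLE_pow {P : Poly2 K} (hP : WDegLE w₁ w₂ P D) (n : ℕ) :
    WDegLE w₁ w₂ (P ^ n) ((n : ℝ) * D) := by
  induction n with
  | zero => simpa using wdegLE_one
  | succ k ih =>
      have := wdegLE_mul ih hP
      rw [pow_succ]
      apply wdegLE_mono this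
      push_cast; ring_nf; exact le_refl _

lemma wdegLE_sum {ι : Type*} {s : Finset ι} {g : ι → Poly2 K}
    (h : ∀ i ∈ s, WDegLE w₁ w₂ (g i) D) : WDegLE w₁ w₂ (∑ i ∈ s, g i) D := by
  classical
  induction s using Finset.induction_on with
  | empty => simpa using wdegLE_zero
  | insert _ _ hni ih =>
      rw [Finset.sum_insert hni]
      exact wdegLE_add (h _ (Finset.mem_insert_self _ _))
        (ih fun i hi => h i (Finset.mem_insert_of_mem hi))

lemma wdegLE_X0 : WDegLE w₁ w₂ (X 0 : Poly2 K) w₁ := by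
  intro m hm
  rw [MvPolynomial.support_X, Finset.mem_singleton] at hm
  subst hm
  simp [Finsupp.single_apply]

lemma wdegLE_X1 : WDegLE w₁ w₂ (X 1 : Poly2 K) w₂ := by
  intro m hm
  rw [MvPolynomial.support_X, Finset.mem_singleton] at hm
  subst hm
  simp [Finsupp.single_apply]

lemma wdegLE_aeval {f : Fin 2 → Poly2 K} (h0 : WDegLE w₁ w₂ (f 0) w₁)
    (h1 : WDegLE w₁ w₂ (f 1) w₂) {P : Poly2 K} (hP : WDegLE w₁ w₂ P D) :
    WDegLE w₁ w₂ (aeval f P) D := by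
  rw [aeval_def, eval₂_eq']
  apply wdegLE_sum
  intro d hd
  have hbound := hP d hd
  have hterm : WDegLE w₁ w₂ ((algebraMap K (Poly2 K)) (coeff d P) * ∏ i, f i ^ d i)
      (0 + ((d 0 : ℝ) * w₁ + (d 1 : ℝ) * w₂)) := by
    rw [Fin.prod_univ_two]
    have hc : WDegLE w₁ w₂ ((algebraMap K (Poly2 K)) (coeff d P)) 0 := wdegLE_C _
    have hp0 := wdegLE_pow h0 (d 0)
    have hp1 := wdegLE_pow h1 (d 1)
    exact wdegLE_mul hc (wdegLE_mul hp0 hp1)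
  apply wdegLE_mono hterm
  linarith [hbound, mul_comm (d 0 : ℝ) w₁]

lemma wdegLE_polyaeval {Q : Poly2 K} (hQ : WDegLE w₁ w₂ Q D) (hD : 0 ≤ D) (r : Polynomial K) :
    WDegLE w₁ w₂ (Polynomial.aeval Q r) ((r.natDegree : ℝ) * D) := by
  rw [Polynomial.aeval_eq_sum_range]
  apply wdegLE_sum
  intro i hi
  have hi' : (i : ℝ) ≤ (r.natDegree : ℝ) := by
    have := Nat.lt_succ_iff.mp (Finset.mem_range.mp hi)
    exact_mod_cast this
  apply wdegLE_mono (wdegLE_smul _ (wdegLE_pow hQ i))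
  nlinarith

end WDeg

/-- Chain rule for partial derivatives of a substitution. -/
lemma pderiv_aeval_two {R : Type*} [CommRing R] (f : Fin 2 → MvPolynomial (Fin 2) R)
    (P : MvPolynomial (Fin 2) R) (i : Fin 2) :
    pderiv i (aeval f P) =
      aeval f (pderiv 0 P) * pderiv i (f 0) + aeval f (pderiv 1 P) * pderiv i (f 1) := by
  induction P using MvPolynomial.induction_on with
  | C a => simp
  | add p q hp hq => simp only [map_add, hp, hq]; ring
  | mul_X p j hp =>
      simp only [map_mul, aeval_X, pderiv_mul, hp]
      fin_cases j <;>
        simp [pderiv_X_self, pderiv_X_of_ne (show (0 : Fin 2) ≠ 1 by decide),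
          pderiv_X_of_ne (show (1 : Fin 2) ≠ 0 by decide)] <;> ring

/-- The forward substitution. -/
def phiFwd (α β γ : K) (p : Polynomial K) : Poly2 K →ₐ[K] Poly2 K :=
  MvPolynomial.aeval (fun i : Fin 2 =>
    if i = 0 then C α * X 0 + C β
    else C γ * X 1 + Polynomial.aeval (X 0 : Poly2 K) p)

lemma algHom_polyaeval (F : Poly2 K →ₐ[K] Poly2 K) (Q : Poly2 K) (q : Polynomial K) :
    F (Polynomial.aeval Q q) = Polynomial.aeval (F Q) q :=
  (Polynomial.aeval_algHom_apply F Q q).symm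

lemma CC_cancel {k : K} (hk : k ≠ 0) : (C k : Poly2 K) * C k⁻¹ = 1 := by
  rw [← C_mul, mul_inv_cancel₀ hk, C_1]

/-- `phiInv` and `phiFwd` are mutually inverse. -/
def phiEquiv (α β γ : K) (p : Polynomial K) (hα : α ≠ 0) (hγ : γ ≠ 0) :
    Poly2 K ≃ₐ[K] Poly2 K := by
  have hCα : (C α : Poly2 K) * C α⁻¹ = 1 := CC_cancel hα
  have hCγ : (C γ : Poly2 K) * C γ⁻¹ = 1 := CC_cancel hγ
  have hI0 : phiInv α β γ p (X 0) = C α⁻¹ * (X 0 - C β) := by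
    simp [phiInv]
  have hI1 : phiInv α β γ p (X 1) =
      C γ⁻¹ * (X 1 - Polynomial.aeval (C α⁻¹ * (X 0 - C β) : Poly2 K) p) := by
    simp [phiInv]
  have hW0 : phiFwd α β γ p (X 0) = C α * X 0 + C β := by
    simp [phiFwd]
  have hW1 : phiFwd α β γ p (X 1) = C γ * X 1 + Polynomial.aeval (X 0 : Poly2 K) p := by
    simp [phiFwd]
  refine AlgEquiv.ofAlgHom (phiInv α β γ p) (phiFwd α β γ p) ?_ ?_
  · apply MvPolynomial.algHom_ext
    intro i
    fin_cases i <;> simp only [AlgHom.comp_apply, AlgHom.id_apply, Fin.zero_eta, Fin.mk_one]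
    · rw [hW0, map_add, map_mul, algHom_C, algHom_C, hI0]
      simp only [MvPolynomial.algebraMap_eq]
      linear_combination (X 0 - C β : Poly2 K) * hCα
    · rw [hW1, map_add, map_mul, algHom_C, hI1, algHom_polyaeval, hI0]
      simp only [MvPolynomial.algebraMap_eq]
      linear_combination (X 1 - Polynomial.aeval (C α⁻¹ * (X 0 - C β) : Poly2 K) p) * hCγ
  · apply MvPolynomial.algHom_ext
    intro i
    have hGF0 : phiFwd α β γ p (C α⁻¹ * (X 0 - C β)) = X 0 := by
      rw [map_mul, map_sub, algHom_C, algHom_C, hW0]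
      simp only [MvPolynomial.algebraMap_eq]
      linear_combination (X 0 : Poly2 K) * hCα
    fin_cases i <;> simp only [AlgHom.comp_apply, AlgHom.id_apply, Fin.zero_eta, Fin.mk_one]
    · rw [hI0, map_mul, map_sub, algHom_C, algHom_C, hW0]
      simp only [MvPolynomial.algebraMap_eq]
      linear_combination (X 0 : Poly2 K) * hCα
    · rw [hI1, map_mul, map_sub, algHom_C, hW1, algHom_polyaeval, hGF0]
      simp only [MvPolynomial.algebraMap_eq]
      linear_combination (X 1 : Poly2 K) * hCγ

lemma squarefree_map {Γ : Poly2 K} (e : Poly2 K ≃ₐ[K] Poly2 K) (h : Squarefree Γ) :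
    Squarefree (e Γ) := by
  intro x hx
  have h1 : e.symm x * e.symm x ∣ Γ := by
    have := map_dvd e.symm.toAlgHom hx
    simpa using this
  have h2 := h _ h1
  have h3 := h2.map e.toAlgHom
  simpa using h3

end AlgDOPAux

open AlgDOPAux in
lemma changeClaim_of_field (K : Type*) [Field K] : ChangeClaim K := by
  intro w hw a b c Γ α β γ p hα hγ hp hsol
  obtain ⟨ha, hb, hc, hΔ, hsf, hdvdΔ, hdvd1, hdvd2⟩ := hsol
  set q : Poly2 K := toX (Polynomial.derivative p) with hq_def
  set f : Fin 2 → Poly2 K := fun i : Fin 2 =>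
    if i = 0 then C α⁻¹ * (X 0 - C β)
    else C γ⁻¹ * (X 1 - Polynomial.aeval (C α⁻¹ * (X 0 - C β) : Poly2 K) p) with hf_def
  set F : Poly2 K →ₐ[K] Poly2 K := phiInv α β γ p with hF_def
  have hphi : F = (MvPolynomial.aeval f : Poly2 K →ₐ[K] Poly2 K) := rfl
  have hpA : pushA α β γ p a = F (C (α ^ 2) * a) := rfl
  have hpB : pushB α β γ p a b = F (C α * (q * a + C γ * b)) := rfl
  have hpC : pushC α β γ p a b c = F (q ^ 2 * a + C (2 * γ) * (q * b) + C (γ ^ 2) * c) := rfl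
  have hFX0 : F (X 0) = f 0 := by rw [hphi]; simp
  have hf0 : f 0 = C α⁻¹ * (X 0 - C β) := by simp [hf_def]
  have hf1 : f 1 = C γ⁻¹ * (X 1 - Polynomial.aeval (f 0) p) := by
    simp [hf_def]
  -- small degree facts
  have hw0 : (0:ℝ) < w := lt_trans one_pos hw
  have hdeg_f0 : WDegLE 1 w (f 0) 1 := by
    rw [hf0]
    simpa using wdegLE_C_mul _ (wdegLE_sub wdegLE_X0 (wdegLE_mono (wdegLE_C β) one_pos.le))
  have hdeg_f1 : WDegLE 1 w (f 1) w := by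
    rw [hf1]
    apply wdegLE_C_mul
    apply wdegLE_sub wdegLE_X1
    have := wdegLE_polyaeval hdeg_f0 one_pos.le p
    exact wdegLE_mono this (by rw [mul_one]; exact hp)
  have hFdeg : ∀ {P : Poly2 K} {D : ℝ}, WDegLE 1 w P D → WDegLE 1 w (F P) D := by
    intro P D hP
    rw [hphi]
    exact wdegLE_aeval hdeg_f0 hdeg_f1 hP
  have hdeg_q : WDegLE 1 w q (w - 1) := by
    rcases Nat.eq_zero_or_pos p.natDegree with h0 | hpos
    · have : Polynomial.derivative p = 0 := by
        rw [Polynomial.eq_C_of_natDegree_eq_zero h0]; simp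
      rw [hq_def, this]
      simpa [toX] using (wdegLE_zero : WDegLE 1 w (0 : Poly2 K) (w-1))
    · have hd : ((Polynomial.derivative p).natDegree : ℝ) ≤ w - 1 := by
        have h1 := Polynomial.natDegree_derivative_le p
        have h2 : ((Polynomial.derivative p).natDegree : ℝ) ≤ (p.natDegree : ℝ) - 1 := by
          have : (Polynomial.derivative p).natDegree + 1 ≤ p.natDegree := by omega
          have := (Nat.cast_le (α := ℝ)).mpr this
          push_cast at this; linarith
        linarith
      have := wdegLE_polyaeval (wdegLE_X0 (K := K) (w₁ := 1) (w₂ := w)) one_pos.le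
        (Polynomial.derivative p)
      rw [hq_def]
      exact wdegLE_mono (by simpa [toX, mul_one] using this) hd
  -- equiv facts
  set e : Poly2 K ≃ₐ[K] Poly2 K := AlgDOPAux.phiEquiv α β γ p hα hγ with he_def
  have he : ∀ x, e x = F x := fun x => rfl
  -- partial derivatives of f
  have hpd00 : pderiv 0 (f 0) = C α⁻¹ := by
    rw [hf0]
    simp [pderiv_C_mul, pderiv_X_self, pderiv_C]
  have hpd10 : pderiv 1 (f 0) = 0 := by
    rw [hf0]
    simp [pderiv_C_mul, pderiv_X_of_ne (show (0 : Fin 2) ≠ 1 by decide), pderiv_C]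
  have hFq : Polynomial.aeval (f 0) (Polynomial.derivative p) = F q := by
    rw [hq_def, toX, algHom_polyaeval, hFX0]
  have hpaev : pderiv 0 (Polynomial.aeval (f 0) p)
      = Polynomial.aeval (f 0) (Polynomial.derivative p) * pderiv 0 (f 0) := by
    have := Derivation.map_aeval (pderiv (R := K) (σ := Fin 2) 0) p (f 0)
    rw [this]; simp [smul_eq_mul]
  have hpd01 : pderiv 0 (f 1) = -(C γ⁻¹ * (F q * C α⁻¹)) := by
    rw [hf1]
    rw [pderiv_C_mul, map_sub, pderiv_X_of_ne (show (1 : Fin 2) ≠ 0 by decide), hpaev,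
      hFq, hpd00]
    ring
  have hpd11 : pderiv 1 (f 1) = C γ⁻¹ := by
    rw [hf1]
    rw [pderiv_C_mul, map_sub, pderiv_X_self]
    have : pderiv 1 (Polynomial.aeval (f 0) p) = 0 := by
      have := Derivation.map_aeval (pderiv (R := K) (σ := Fin 2) 1) p (f 0)
      rw [this, hpd10]; simp
    rw [this]; ring
  -- chain rule for Γ
  have hchain : ∀ (P : Poly2 K) (i : Fin 2),
      pderiv i (F P) = F (pderiv 0 P) * pderiv i (f 0) + F (pderiv 1 P) * pderiv i (f 1) := by
    intro P i
    rw [hphi]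
    exact pderiv_aeval_two f P i
  have hΓ0 : pderiv 0 (F Γ) =
      F (pderiv 0 Γ) * C α⁻¹ + F (pderiv 1 Γ) * (-(C γ⁻¹ * (F q * C α⁻¹))) := by
    rw [hchain, hpd00, hpd01]
  have hΓ1 : pderiv 1 (F Γ) = F (pderiv 1 Γ) * C γ⁻¹ := by
    rw [hchain, hpd10, hpd11]; ring
  have hCα : (C α : Poly2 K) * C α⁻¹ = 1 := CC_cancel hα
  have hCγ : (C γ : Poly2 K) * C γ⁻¹ = 1 := CC_cancel hγ
  -- the three key identities
  have key1 : pushA α β γ p a * pderiv 0 (F Γ) + pushB α β γ p a b * pderiv 1 (F Γ)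
      = F (C α * (a * pderiv 0 Γ + b * pderiv 1 Γ)) := by
    rw [hΓ0, hΓ1]
    rw [hpA, hpB]
    simp only [map_add, map_mul, map_pow, algHom_C, MvPolynomial.algebraMap_eq, C_mul, C_pow, map_ofNat]
    linear_combination (C α * F a * F (pderiv 0 Γ)
        - C α * F q * F a * F (pderiv 1 Γ) * C γ⁻¹) * hCα
      + (C α * F b * F (pderiv 1 Γ)) * hCγ
  have key2 : pushB α β γ p a b * pderiv 0 (F Γ) + pushC α β γ p a b c * pderiv 1 (F Γ)
      = F (q * (a * pderiv 0 Γ + b * pderiv 1 Γ) + C γ * (b * pderiv 0 Γ + c * pderiv 1 Γ)) := by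
    rw [hΓ0, hΓ1]
    rw [hpB, hpC]
    simp only [map_add, map_mul, map_pow, algHom_C, MvPolynomial.algebraMap_eq, C_mul, C_pow, map_ofNat]
    linear_combination ((F q * F a + C γ * F b) * F (pderiv 0 Γ)
        - C γ⁻¹ * F q ^ 2 * F a * F (pderiv 1 Γ)
        - C γ * C γ⁻¹ * F q * F b * F (pderiv 1 Γ)) * hCα
      + (F q * F b * F (pderiv 1 Γ) + C γ * F c * F (pderiv 1 Γ)) * hCγ
  have keyDet : pushA α β γ p a * pushC α β γ p a b c - pushB α β γ p a b ^ 2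
      = F (C (α ^ 2 * γ ^ 2) * (a * c - b ^ 2)) := by
    rw [hpA, hpB, hpC, ← map_mul, ← map_pow, ← map_sub]
    congr 1
    simp only [C_mul, C_pow, map_ofNat]
    ring
  have hFinj : Function.Injective F := by
    intro x y hxy
    have : e x = e y := by rw [he, he, hxy]
    exact e.injective this
  refine ⟨?_, ?_, ?_, ?_, ?_, ?_, ?_, ?_⟩
  · -- degree of pushA
    rw [hpA]
    exact hFdeg (wdegLE_C_mul _ ha)
  · -- degree of pushB
    rw [hpB]
    apply hFdeg
    apply wdegLE_C_mul
    apply wdegLE_add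
    · exact wdegLE_mono (wdegLE_mul hdeg_q ha) (by linarith)
    · exact wdegLE_C_mul _ hb
  · -- degree of pushC
    rw [hpC]
    apply hFdeg
    apply wdegLE_add
    apply wdegLE_add
    · have := wdegLE_mul (wdegLE_pow hdeg_q 2) ha
      exact wdegLE_mono this (by push_cast; linarith)
    · exact wdegLE_mono (wdegLE_C_mul _ (wdegLE_mul hdeg_q hb)) (by linarith)
    · exact wdegLE_C_mul _ hc
  · -- nonvanishing of the determinant
    rw [keyDet]
    intro h
    have h0 : (C (α ^ 2 * γ ^ 2) : Poly2 K) * (a * c - b ^ 2) = 0 := by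
      apply hFinj
      rw [h, map_zero]
    rcases mul_eq_zero.mp h0 with h1 | h1
    · rw [MvPolynomial.C_eq_zero] at h1
      exact (mul_ne_zero (pow_ne_zero 2 hα) (pow_ne_zero 2 hγ)) h1
    · exact hΔ h1
  · -- squarefree
    exact (he Γ) ▸ AlgDOPAux.squarefree_map e hsf
  · -- divides determinant
    rw [keyDet]
    exact map_dvd F (hdvdΔ.mul_left _)
  · -- first derivative condition
    rw [key1]
    exact map_dvd F (hdvd1.mul_left _)
  · -- second derivative condition
    rw [key2]
    exact map_dvd F (dvd_add (hdvd1.mul_left _) (hdvd2.mul_left _))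

/-- Proposition 2.5(b): a `(1,w)`-admissible change of variables transforms solutions
of the `(1,w)`-AlgDOP problem into solutions, for `K = ℝ` and for `K = ℂ`. -/
theorem algDOP_admissible_change : ChangeClaim ℝ ∧ ChangeClaim ℂ :=
  ⟨changeClaim_of_field ℝ, changeClaim_of_field ℂ⟩
end
end

section
/- Let w₁, w₂ > 0 be real numbers, let g¹¹ ∈ ℝ[x] and g²² ∈ ℝ[y] be nonzero univariate polynomials, and let L¹, L² ∈ ℝ[x,y] satisfy deg_{(w₁,w₂)} L¹ ≤ w₁ and deg_{(w₁,w₂)} L² ≤ w₂. Suppose that g²²(y)·∂_y L¹(x,y) = g¹¹(x)·∂ₓ L²(x,y) as polynomials in ℝ[x,y], and that ∂_y L¹ is not the zero polynomial. Then w₁ = w₂ and both g¹¹ and g²² are constant polynomials. (This is the key computational step, in dimension 2, in the proof that a diagonal-cometric solution of the weighted SDOP problem has a product measure density.) -/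
open MvPolynomial

noncomputable section

lemma support_pderiv_mem {i : Fin 2} {P : Poly2 ℝ} {m : Fin 2 →₀ ℕ}
    (hm : m ∈ (pderiv i P).support) :
    ∃ d ∈ P.support, d i ≠ 0 ∧ m = d - Finsupp.single i 1 := by
  classical
  have h : coeff m (pderiv i P) ≠ 0 := mem_support_iff.mp hm
  rw [P.as_sum, map_sum] at h
  simp only [pderiv_monomial, coeff_sum, coeff_monomial] at h
  obtain ⟨d, hd, hne⟩ := Finset.exists_ne_zero_of_sum_ne_zero h
  split_ifs at hne with hdm
  · refine ⟨d, hd, ?_, hdm.symm⟩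
    intro h0
    simp [h0] at hne
  · simp at hne

lemma support_aevalX {i j : Fin 2} (hij : j ≠ i) (q : Polynomial ℝ) :
    ∀ m ∈ (Polynomial.aeval (X i : Poly2 ℝ) q).support, m j = 0 := by
  induction q using Polynomial.induction_on' with
  | add p r hp hr =>
      intro m hm
      rw [map_add] at hm
      rcases Finset.mem_union.mp (MvPolynomial.support_add hm) with h | h
      · exact hp m h
      · exact hr m h
  | monomial n a =>
      intro m hm
      have he : (Polynomial.aeval (X i : Poly2 ℝ)) (Polynomial.monomial n a)
          = MvPolynomial.monomial (Finsupp.single i n) a := by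
        rw [Polynomial.aeval_monomial, ← C_mul_X_pow_eq_monomial]
        rfl
      rw [he] at hm
      have := MvPolynomial.support_monomial_subset hm
      rw [Finset.mem_singleton] at this
      subst this
      exact Finsupp.single_eq_of_ne hij

/-- Retraction sending `X i ↦ X`, other variable `↦ 0`. -/
def psi (i : Fin 2) : Poly2 ℝ →ₐ[ℝ] Polynomial ℝ :=
  MvPolynomial.aeval (fun j : Fin 2 => if j = i then Polynomial.X else 0)

lemma psi_aevalX (i : Fin 2) (q : Polynomial ℝ) :
    psi i (Polynomial.aeval (X i : Poly2 ℝ) q) = q := by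
  rw [← Polynomial.aeval_algHom_apply]
  simp [psi]

lemma psi_C (i : Fin 2) (r : ℝ) : psi i (C r) = Polynomial.C r := by
  simp [psi, algebraMap_eq]

lemma psi_toX (q : Polynomial ℝ) : psi 0 (toX q) = q := psi_aevalX 0 q

lemma psi_toY (q : Polynomial ℝ) : psi 1 (toY q) = q := psi_aevalX 1 q

/-- Key computational step (dimension 2) in the proof that a diagonal-cometric solution
of the weighted SDOP problem has a product measure density: if `g¹¹ ∈ ℝ[x]`,
`g²² ∈ ℝ[y]` are nonzero, `deg_w L¹ ≤ w₁`, `deg_w L² ≤ w₂`,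
`g²²(y)·∂_y L¹ = g¹¹(x)·∂ₓ L²` and `∂_y L¹ ≠ 0`, then `w₁ = w₂` and both `g¹¹`
and `g²²` are constant. -/
theorem diagonal_cometric_key (w₁ w₂ : ℝ) (hw₁ : 0 < w₁) (hw₂ : 0 < w₂)
    (g11 g22 : Polynomial ℝ) (hg11 : g11 ≠ 0) (hg22 : g22 ≠ 0)
    (L1 L2 : Poly2 ℝ)
    (hL1 : WDegLE w₁ w₂ L1 w₁) (hL2 : WDegLE w₁ w₂ L2 w₂)
    (heq : toY g22 * pderiv 1 L1 = toX g11 * pderiv 0 L2)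
    (hne : pderiv 1 L1 ≠ 0) :
    w₁ = w₂ ∧ (∃ k : ℝ, g11 = Polynomial.C k) ∧ (∃ k : ℝ, g22 = Polynomial.C k) := by
  classical
  have hP0 : ∀ m ∈ (pderiv 1 L1).support, m 0 = 0 := by
    intro m hm
    obtain ⟨d, hd, hdi, rfl⟩ := support_pderiv_mem hm
    have hdeg := hL1 d hd
    have hd1 : (1 : ℝ) ≤ (d 1 : ℝ) := by
      exact_mod_cast Nat.one_le_iff_ne_zero.mpr hdi
    have hd0 : d 0 = 0 := by
      by_contra h0
      have : (1 : ℝ) ≤ (d 0 : ℝ) := by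
        exact_mod_cast Nat.one_le_iff_ne_zero.mpr h0
      nlinarith
    simp [Finsupp.tsub_apply, hd0]
  have hQ1 : ∀ m ∈ (pderiv 0 L2).support, m 1 = 0 := by
    intro m hm
    obtain ⟨d, hd, hdi, rfl⟩ := support_pderiv_mem hm
    have hdeg := hL2 d hd
    have hd0 : (1 : ℝ) ≤ (d 0 : ℝ) := by
      exact_mod_cast Nat.one_le_iff_ne_zero.mpr hdi
    have hd1 : d 1 = 0 := by
      by_contra h0
      have : (1 : ℝ) ≤ (d 1 : ℝ) := by
        exact_mod_cast Nat.one_le_iff_ne_zero.mpr h0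
      nlinarith
    have : (0 : Fin 2) ≠ 1 := by decide
    simp [Finsupp.tsub_apply, hd1]
  -- w₂ ≤ w₁ from ∂_y L1 ≠ 0
  have hw21 : w₂ ≤ w₁ := by
    obtain ⟨m, hm⟩ := (MvPolynomial.support_nonempty.mpr hne)
    obtain ⟨d, hd, hdi, -⟩ := support_pderiv_mem hm
    have hdeg := hL1 d hd
    have hd1 : (1 : ℝ) ≤ (d 1 : ℝ) := by
      exact_mod_cast Nat.one_le_iff_ne_zero.mpr hdi
    nlinarith [Nat.cast_nonneg (α := ℝ) (d 0)]
  have hE0 : ∀ m ∈ (toY g22 * pderiv 1 L1).support, m 0 = 0 := by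
    intro m hm
    have := MvPolynomial.support_mul _ _ hm
    rw [Finset.mem_add] at this
    obtain ⟨a, ha, b, hb, rfl⟩ := this
    have h1 : a 0 = 0 := support_aevalX (by decide) g22 a ha
    have h2 : b 0 = 0 := hP0 b hb
    simp [h1, h2]
  have hE1 : ∀ m ∈ (toY g22 * pderiv 1 L1).support, m 1 = 0 := by
    intro m hm
    rw [heq] at hm
    have := MvPolynomial.support_mul _ _ hm
    rw [Finset.mem_add] at this
    obtain ⟨a, ha, b, hb, rfl⟩ := this
    have h1 : a 1 = 0 := support_aevalX (by decide) g11 a ha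
    have h2 : b 1 = 0 := hQ1 b hb
    simp [h1, h2]
  -- E is a constant
  have hEsupp : ∀ m ∈ (toY g22 * pderiv 1 L1).support, m = 0 := by
    intro m hm
    ext i
    fin_cases i
    · exact hE0 m hm
    · exact hE1 m hm
  set c : ℝ := coeff 0 (toY g22 * pderiv 1 L1) with hc
  have hEC : toY g22 * pderiv 1 L1 = C c := by
    ext n
    rw [coeff_C]
    split_ifs with hn
    · rw [← hn]
    · have : n ∉ (toY g22 * pderiv 1 L1).support := fun h => hn ((hEsupp n h).symm)
      rw [notMem_support_iff] at this
      rw [this]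
  -- E ≠ 0
  have htoY : toY g22 ≠ 0 := by
    intro h
    apply hg22
    have := congrArg (psi 1) h
    rwa [psi_toY, map_zero] at this
  have hEne : toY g22 * pderiv 1 L1 ≠ 0 := mul_ne_zero htoY hne
  have hcne : c ≠ 0 := by
    intro h
    rw [hEC, h, map_zero] at hEne
    exact hEne rfl
  have hCc : IsUnit (Polynomial.C c) := Polynomial.isUnit_C.mpr (isUnit_iff_ne_zero.mpr hcne)
  -- ∂_x L2 ≠ 0, hence w₁ ≤ w₂
  have hQne : pderiv 0 L2 ≠ 0 := by
    intro h
    rw [heq, h, mul_zero] at hEC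
    exact hcne (by simpa using hEC.symm)
  have hw12 : w₁ ≤ w₂ := by
    obtain ⟨m, hm⟩ := (MvPolynomial.support_nonempty.mpr hQne)
    obtain ⟨d, hd, hdi, -⟩ := support_pderiv_mem hm
    have hdeg := hL2 d hd
    have hd0 : (1 : ℝ) ≤ (d 0 : ℝ) := by
      exact_mod_cast Nat.one_le_iff_ne_zero.mpr hdi
    nlinarith [Nat.cast_nonneg (α := ℝ) (d 1)]
  refine ⟨le_antisymm hw12 hw21, ?_, ?_⟩
  · -- g11 constant
    have h1 : g11 * psi 0 (pderiv 0 L2) = Polynomial.C c := by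
      have := congrArg (psi 0) (heq.symm.trans hEC)
      rwa [map_mul, psi_toX, psi_C] at this
    have : IsUnit g11 := isUnit_of_mul_isUnit_left (h1 ▸ hCc)
    obtain ⟨k, -, hk⟩ := Polynomial.isUnit_iff.mp this
    exact ⟨k, hk.symm⟩
  · -- g22 constant
    have h1 : g22 * psi 1 (pderiv 1 L1) = Polynomial.C c := by
      have := congrArg (psi 1) hEC
      rwa [map_mul, psi_toY, psi_C] at this
    have : IsUnit g22 := isUnit_of_mul_isUnit_left (h1 ▸ hCc)
    obtain ⟨k, -, hk⟩ := Polynomial.isUnit_iff.mp this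
    exact ⟨k, hk.symm⟩
end
end

section
/- Let w > 1 be real and let (g,Γ), with g = [[a,b],[b,c]], be a solution of the (1,w)-AlgDOP problem over ℂ. If x divides Γ, then x divides a and x divides b. -/
open MvPolynomial

noncomputable section

lemma primeX0 : Prime (X 0 : Poly2 ℂ) := by
  rw [← MulEquiv.prime_iff (MvPolynomial.finSuccEquiv ℂ 1).toMulEquiv]
  simpa [MvPolynomial.finSuccEquiv_X_zero] using Polynomial.prime_X

/-- Lemma 3.2: if `(g,Γ)` is a solution of the `(1,w)`-AlgDOP problem over `ℂ` with
`w > 1` and `x` divides `Γ`, then `x` divides `a` and `x` divides `b`. -/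
theorem x_dvd_a_and_b (w : ℝ) (hw : 1 < w) (a b c Γ : Poly2 ℂ)
    (h : IsAlgDOP 1 w a b c Γ) (hx : (X 0 : Poly2 ℂ) ∣ Γ) :
    (X 0 : Poly2 ℂ) ∣ a ∧ (X 0 : Poly2 ℂ) ∣ b := by
  obtain ⟨-, -, -, -, hsf, -, h1, h2⟩ := h
  obtain ⟨Γ₁, rfl⟩ := hx
  have hX : Prime (X 0 : Poly2 ℂ) := primeX0
  have hnd : ¬ (X 0 : Poly2 ℂ) ∣ Γ₁ := fun hd =>
    hX.not_unit (hsf (X 0) (mul_dvd_mul_left _ hd))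
  have hp0 : pderiv 0 ((X 0 : Poly2 ℂ) * Γ₁) = Γ₁ + X 0 * pderiv 0 Γ₁ := by
    rw [pderiv_mul]; simp [add_comm]
  have hp1 : pderiv 1 ((X 0 : Poly2 ℂ) * Γ₁) = X 0 * pderiv 1 Γ₁ := by
    rw [pderiv_mul]; simp
  have key : ∀ u v : Poly2 ℂ,
      ((X 0 : Poly2 ℂ) * Γ₁) ∣ (u * pderiv 0 ((X 0 : Poly2 ℂ) * Γ₁)
        + v * pderiv 1 ((X 0 : Poly2 ℂ) * Γ₁)) → (X 0 : Poly2 ℂ) ∣ u := by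
    intro u v hdvd
    have hE : (X 0 : Poly2 ℂ) ∣ u * Γ₁ + X 0 * (u * pderiv 0 Γ₁ + v * pderiv 1 Γ₁) := by
      have h' := (dvd_mul_right (X 0 : Poly2 ℂ) Γ₁).trans hdvd
      rw [hp0, hp1] at h'
      convert h' using 1; ring
    have huΓ : (X 0 : Poly2 ℂ) ∣ u * Γ₁ :=
      (dvd_add_right (Dvd.intro _ rfl)).mp (by rwa [add_comm] at hE)
    rcases hX.dvd_or_dvd huΓ with h | h
    · exact h
    · exact absurd h hnd
  exact ⟨key a b h1, key b c h2⟩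
end
end

section
/- Let w > 1 be real and let (g,Γ), with g = [[a,b],[b,c]], be a solution of the (1,w)-AlgDOP problem over ℂ. Suppose Γ has a local branch γ = (ξ,η), with ξ, η nonzero formal Laurent series, such that ord ξ = p > 0 and ord η = q < 0. Then the coefficient of the monomial y in b vanishes (i.e., the degree-1-in-y part of b is of the form b₁₁·x·y), and a is a constant multiple of x². -/
open MvPolynomial

noncomputable section

namespace AlgDOPAux

abbrev K := LaurentSeries ℂ

/-- Formal derivative of a Laurent series. -/
def D (f : K) : K where
  coeff n := ((n + 1 : ℤ) : ℂ) * f.coeff (n + 1)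
  isPWO_support' := by
    have hmono : MonotoneOn (fun x : ℤ => x - 1) f.support :=
      fun x _ y _ hxy => by dsimp only; omega
    apply Set.IsPWO.mono (f.isPWO_support'.image_of_monotoneOn hmono)
    intro n hn
    have h1 : f.coeff (n + 1) ≠ 0 := by
      intro h0
      simp only [Function.mem_support, h0, mul_zero, ne_eq, not_true_eq_false] at hn
    exact ⟨n + 1, h1, by dsimp only; omega⟩

@[simp] lemma D_coeff (f : K) (n : ℤ) :
    (D f).coeff n = ((n + 1 : ℤ) : ℂ) * f.coeff (n + 1) := rfl

lemma D_add (f g : K) : D (f + g) = D f + D g := by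
  ext n; simp [mul_add]

lemma D_zero : D 0 = 0 := by
  ext n; simp

lemma D_single_zero (r : ℂ) : D (HahnSeries.single (0 : ℤ) r) = 0 := by
  ext n
  rw [D_coeff, HahnSeries.coeff_zero, HahnSeries.coeff_single]
  by_cases h : (n + 1 : ℤ) = 0
  · simp [h]
  · simp [h]

lemma mul_coeff_Icc (f g : K) (n N M : ℤ)
    (hf : ∀ i < N, f.coeff i = 0) (hg : ∀ j < M, g.coeff j = 0) :
    (f * g).coeff n = ∑ i ∈ Finset.Icc N (n - M), f.coeff i * g.coeff (n - i) := by
  classical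
  rw [HahnSeries.coeff_mul]
  set emb : ℤ ↪ ℤ × ℤ :=
    ⟨fun i => (i, n - i), fun a b hab => by simpa using congrArg Prod.fst hab⟩ with hemb
  have hsub : Finset.antidiagonal f.isPWO_support g.isPWO_support n
      ⊆ (Finset.Icc N (n - M)).map emb := by
    intro x hx
    rw [Finset.mem_addAntidiagonal] at hx
    obtain ⟨h1, h2, h3⟩ := hx
    rw [Finset.mem_map]
    refine ⟨x.1, ?_, ?_⟩
    · rw [Finset.mem_Icc]
      constructor
      · by_contra hlt
        exact h1 (hf _ (by omega))
      · have h4 : M ≤ x.2 := by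
          by_contra hlt
          exact h2 (hg _ (by omega))
        omega
    · have : x.2 = n - x.1 := by omega
      rw [hemb]
      exact Prod.ext rfl this.symm
  rw [Finset.sum_subset hsub, Finset.sum_map]
  · rfl
  · intro x hx hnx
    rw [Finset.mem_map] at hx
    obtain ⟨i, _, rfl⟩ := hx
    rw [Finset.mem_addAntidiagonal] at hnx
    simp only [hemb, Function.Embedding.coeFn_mk] at hnx ⊢
    change ¬ (i ∈ f.support ∧ n - i ∈ g.support ∧ i + (n - i) = n) at hnx
    change f.coeff i * g.coeff (n - i) = 0
    by_cases h1 : f.coeff i = 0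
    · rw [h1, zero_mul]
    · have h2 : g.coeff (n - i) = 0 := by
        by_contra h2
        exact hnx ⟨h1, h2, by omega⟩
      rw [h2, mul_zero]

lemma D_mul (f g : K) : D (f * g) = D f * g + f * D g := by
  ext n
  have hf : ∀ i < f.order, f.coeff i = 0 :=
    fun i hi => HahnSeries.coeff_eq_zero_of_lt_order hi
  have hg : ∀ j < g.order, g.coeff j = 0 :=
    fun j hj => HahnSeries.coeff_eq_zero_of_lt_order hj
  have hDf : ∀ i < f.order - 1, (D f).coeff i = 0 := by
    intro i hi; rw [D_coeff, hf _ (by omega), mul_zero]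
  have hDg : ∀ j < g.order - 1, (D g).coeff j = 0 := by
    intro j hj; rw [D_coeff, hg _ (by omega), mul_zero]
  rw [HahnSeries.coeff_add, D_coeff, mul_coeff_Icc f g (n + 1) f.order g.order hf hg,
      mul_coeff_Icc (D f) g n (f.order - 1) g.order hDf hg,
      mul_coeff_Icc f (D g) n f.order (g.order - 1) hf hDg]
  have h1 : ∑ i ∈ Finset.Icc (f.order - 1) (n - g.order), (D f).coeff i * g.coeff (n - i)
      = ∑ i ∈ Finset.Icc f.order (n + 1 - g.order),
          ((i : ℤ) : ℂ) * f.coeff i * g.coeff (n + 1 - i) := by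
    rw [show Finset.Icc (f.order - 1) (n - g.order)
        = Finset.map (addRightEmbedding (-1)) (Finset.Icc f.order (n + 1 - g.order)) by
      rw [Finset.map_add_right_Icc]; congr 1 <;> ring]
    rw [Finset.sum_map]
    apply Finset.sum_congr rfl
    intro i _
    simp only [addRightEmbedding_apply, D_coeff]
    rw [show i + -1 + 1 = i by ring, show n - (i + -1) = n + 1 - i by ring]
  have h2 : ∑ i ∈ Finset.Icc f.order (n - (g.order - 1)), f.coeff i * (D g).coeff (n - i)
      = ∑ i ∈ Finset.Icc f.order (n + 1 - g.order),
          f.coeff i * (((n + 1 - i : ℤ) : ℂ) * g.coeff (n + 1 - i)) := by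
    rw [show n - (g.order - 1) = n + 1 - g.order by ring]
    apply Finset.sum_congr rfl
    intro i _
    rw [D_coeff, show n - i + 1 = n + 1 - i by ring]
  rw [h1, h2, ← Finset.sum_add_distrib, Finset.mul_sum]
  apply Finset.sum_congr rfl
  intro i _
  push_cast
  ring

lemma D_ne_zero_and_order {f : K} (hf : f ≠ 0) (hford : f.order ≠ 0) :
    D f ≠ 0 ∧ (D f).order = f.order - 1 := by
  have hcoeff : (D f).coeff (f.order - 1) ≠ 0 := by
    rw [D_coeff, show f.order - 1 + 1 = f.order by ring]
    exact mul_ne_zero (by exact_mod_cast hford) (mt HahnSeries.coeff_order_eq_zero.mp hf)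
  have hne : D f ≠ 0 := fun h0 => hcoeff (by rw [h0]; simp)
  refine ⟨hne, le_antisymm (HahnSeries.order_le_of_coeff_ne_zero hcoeff) ?_⟩
  by_contra hlt
  push_neg at hlt
  have h2 := (mt HahnSeries.coeff_order_eq_zero.mp hne)
  rw [D_coeff] at h2
  have h3 : f.coeff ((D f).order + 1) = 0 :=
    HahnSeries.coeff_eq_zero_of_lt_order (by omega)
  rw [h3, mul_zero] at h2
  exact h2 rfl


abbrev Poly2' := MvPolynomial (Fin 2) ℂ

lemma algebraMap_K (c : ℂ) : algebraMap ℂ K c = HahnSeries.single (0:ℤ) c := by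
  rw [show algebraMap ℂ K c
      = HahnSeries.ofPowerSeries ℤ ℂ (algebraMap ℂ (PowerSeries ℂ) c) from rfl]
  rw [PowerSeries.algebraMap_apply, Algebra.algebraMap_self_apply, HahnSeries.ofPowerSeries_C,
    HahnSeries.C_apply]

lemma D_aeval (γ : Fin 2 → K) (P : Poly2') :
    D (MvPolynomial.aeval γ P)
      = MvPolynomial.aeval γ (pderiv 0 P) * D (γ 0)
        + MvPolynomial.aeval γ (pderiv 1 P) * D (γ 1) := by
  induction P using MvPolynomial.induction_on with
  | C c =>
      simp only [aeval_C, pderiv_C, map_zero, zero_mul, add_zero]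
      rw [algebraMap_K]
      exact D_single_zero c
  | add p' q' hp hq =>
      rw [map_add, D_add, hp, hq, map_add (pderiv 0), map_add (pderiv 1), map_add, map_add]
      ring
  | mul_X p' i hp =>
      rw [map_mul, D_mul, hp, aeval_X]
      fin_cases i <;>
        simp only [Fin.zero_eta, Fin.mk_one, Fin.isValue, MvPolynomial.pderiv_mul,
          MvPolynomial.pderiv_X_self,
          MvPolynomial.pderiv_X_of_ne (show (0 : Fin 2) ≠ 1 by decide),
          MvPolynomial.pderiv_X_of_ne (show (1 : Fin 2) ≠ 0 by decide),
          mul_one, mul_zero, add_zero, map_add, map_mul, map_zero, aeval_X, zero_mul] <;>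
        ring

section Orders

variable (ξ η : K)

/-- The branch substitution. -/
def γv : Fin 2 → K := fun i => if i = 0 then ξ else η

lemma γv_zero : γv ξ η 0 = ξ := rfl
lemma γv_one : γv ξ η 1 = η := rfl

/-- The monomial term along the branch. -/
def Tm (m : Fin 2 →₀ ℕ) : K := ξ ^ (m 0) * η ^ (m 1)

lemma Tm_ne_zero (hξ : ξ ≠ 0) (hη : η ≠ 0) (m : Fin 2 →₀ ℕ) : Tm ξ η m ≠ 0 :=
  mul_ne_zero (pow_ne_zero _ hξ) (pow_ne_zero _ hη)

lemma Tm_order (hξ : ξ ≠ 0) (hη : η ≠ 0) (m : Fin 2 →₀ ℕ) :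
    (Tm ξ η m).order = (m 0 : ℤ) * ξ.order + (m 1 : ℤ) * η.order := by
  rw [Tm, HahnSeries.order_mul (pow_ne_zero _ hξ) (pow_ne_zero _ hη),
    HahnSeries.order_pow, HahnSeries.order_pow]
  simp [nsmul_eq_mul]

/-- coefficient of a HahnSeries as an additive hom. -/
def coeffHom (n : ℤ) : K →+ ℂ where
  toFun f := f.coeff n
  map_zero' := rfl
  map_add' _ _ := rfl

lemma coeff_aeval (P : Poly2') (n : ℤ) :
    (MvPolynomial.aeval (γv ξ η) P).coeff n
      = ∑ m ∈ P.support, MvPolynomial.coeff m P * (Tm ξ η m).coeff n := by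
  rw [MvPolynomial.aeval_def, MvPolynomial.eval₂_eq']
  have key : ∀ (cc : ℂ) (T : K) (k : ℤ),
      (HahnSeries.single (0 : ℤ) cc * T).coeff k = cc * T.coeff k := by
    intro cc T k
    have h := HahnSeries.coeff_single_mul_add (r := cc) (x := T) (a := k) (b := 0)
    simpa using h
  have h1 : ∀ m : Fin 2 →₀ ℕ,
      (algebraMap ℂ K) (MvPolynomial.coeff m P) * ∏ i : Fin 2, (γv ξ η) i ^ m i
        = HahnSeries.single (0 : ℤ) (MvPolynomial.coeff m P) * Tm ξ η m := by
    intro m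
    rw [Fin.prod_univ_two]
    congr 1
    exact algebraMap_K _
  rw [Finset.sum_congr rfl (fun m _ => h1 m)]
  rw [show (∑ m ∈ P.support, HahnSeries.single (0 : ℤ) (MvPolynomial.coeff m P) * Tm ξ η m).coeff n
      = coeffHom n (∑ m ∈ P.support,
          HahnSeries.single (0 : ℤ) (MvPolynomial.coeff m P) * Tm ξ η m) from rfl]
  rw [map_sum]
  exact Finset.sum_congr rfl (fun m _ => key _ _ _)

lemma aeval_order_eq (hξ : ξ ≠ 0) (hη : η ≠ 0) (P : Poly2') (m₀ : Fin 2 →₀ ℕ)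
    (hm₀ : m₀ ∈ P.support)
    (hmin : ∀ m ∈ P.support, m ≠ m₀ → (Tm ξ η m₀).order < (Tm ξ η m).order) :
    MvPolynomial.aeval (γv ξ η) P ≠ 0
      ∧ (MvPolynomial.aeval (γv ξ η) P).order = (Tm ξ η m₀).order := by
  classical
  set n₀ := (Tm ξ η m₀).order with hn₀
  have hc : (MvPolynomial.aeval (γv ξ η) P).coeff n₀ ≠ 0 := by
    rw [coeff_aeval]
    rw [Finset.sum_eq_single m₀]
    · exact mul_ne_zero (MvPolynomial.mem_support_iff.mp hm₀)
        (mt HahnSeries.coeff_order_eq_zero.mp (Tm_ne_zero ξ η hξ hη m₀))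
    · intro m hm hne
      rw [HahnSeries.coeff_eq_zero_of_lt_order (hmin m hm hne), mul_zero]
    · intro hnot
      exact absurd hm₀ hnot
  have hlow : ∀ k < n₀, (MvPolynomial.aeval (γv ξ η) P).coeff k = 0 := by
    intro k hk
    rw [coeff_aeval]
    apply Finset.sum_eq_zero
    intro m hm
    have hlt : k < (Tm ξ η m).order := by
      rcases eq_or_ne m m₀ with rfl | hne
      · exact hk
      · exact hk.trans (hmin m hm hne)
    rw [HahnSeries.coeff_eq_zero_of_lt_order hlt, mul_zero]
  have hne : MvPolynomial.aeval (γv ξ η) P ≠ 0 := fun h0 => hc (by rw [h0]; simp)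
  refine ⟨hne, le_antisymm (HahnSeries.order_le_of_coeff_ne_zero hc) ?_⟩
  by_contra hlt
  push_neg at hlt
  exact (mt HahnSeries.coeff_order_eq_zero.mp hne) (hlow _ hlt)

lemma aeval_order_ge (hξ : ξ ≠ 0) (hη : η ≠ 0) (P : Poly2') (L : ℤ)
    (hL : ∀ m ∈ P.support, L ≤ (Tm ξ η m).order)
    (hne : MvPolynomial.aeval (γv ξ η) P ≠ 0) :
    L ≤ (MvPolynomial.aeval (γv ξ η) P).order := by
  by_contra hlt
  push_neg at hlt
  apply (mt HahnSeries.coeff_order_eq_zero.mp hne)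
  rw [coeff_aeval]
  apply Finset.sum_eq_zero
  intro m hm
  rw [HahnSeries.coeff_eq_zero_of_lt_order (lt_of_lt_of_le hlt (hL m hm)), mul_zero]

end Orders


/-- `MvPolynomial (Fin 1) ℂ ≃ Polynomial ℂ`. -/
def e1 : MvPolynomial (Fin 1) ℂ ≃ₐ[ℂ] Polynomial ℂ :=
  (MvPolynomial.finSuccEquiv ℂ 0).trans
    (Polynomial.mapAlgEquiv (MvPolynomial.isEmptyAlgEquiv ℂ (Fin 0)))

/-- `ℂ[x,y] ≃ (ℂ[x])[y]`, with `y` the outer variable. -/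
def e2 : Poly2' ≃ₐ[ℂ] Polynomial (Polynomial ℂ) :=
  (MvPolynomial.renameEquiv ℂ (Equiv.swap 0 1)).trans
    ((MvPolynomial.finSuccEquiv ℂ 1).trans (Polynomial.mapAlgEquiv e1))

lemma e2_X1 : e2 (X 1) = Polynomial.X := by
  rw [e2, AlgEquiv.trans_apply, AlgEquiv.trans_apply]
  rw [MvPolynomial.renameEquiv_apply, MvPolynomial.rename_X, Equiv.swap_apply_right]
  rw [MvPolynomial.finSuccEquiv_X_zero]
  simp [Polynomial.mapAlgEquiv]

lemma e2_X0 : e2 (X 0) = Polynomial.C Polynomial.X := by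
  rw [e2, AlgEquiv.trans_apply, AlgEquiv.trans_apply]
  rw [MvPolynomial.renameEquiv_apply, MvPolynomial.rename_X, Equiv.swap_apply_left]
  rw [show (1 : Fin 2) = Fin.succ 0 from rfl, MvPolynomial.finSuccEquiv_X_succ]
  have : e1 (X 0) = Polynomial.X := by
    rw [e1, AlgEquiv.trans_apply, MvPolynomial.finSuccEquiv_X_zero]
    simp [Polynomial.mapAlgEquiv]
  simp [Polynomial.mapAlgEquiv, this]

lemma e2_pderiv (P : Poly2') : e2 (pderiv 1 P) = Polynomial.derivative (e2 P) := by
  induction P using MvPolynomial.induction_on with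
  | C c =>
      rw [pderiv_C, map_zero]
      rw [show (MvPolynomial.C c : Poly2') = algebraMap ℂ _ c from rfl, AlgEquiv.commutes]
      rw [show algebraMap ℂ (Polynomial (Polynomial ℂ)) c
        = Polynomial.C (Polynomial.C c) from rfl]
      rw [Polynomial.derivative_C]
  | add p' q' hp hq =>
      rw [map_add, map_add, hp, hq, map_add, Polynomial.derivative_add]
  | mul_X p' i hp =>
      rw [MvPolynomial.pderiv_mul, map_add, map_mul, map_mul, hp, map_mul,
        Polynomial.derivative_mul]
      fin_cases i
      · rw [show ((⟨0, by omega⟩ : Fin 2)) = (0 : Fin 2) from rfl,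
          MvPolynomial.pderiv_X_of_ne (show (0 : Fin 2) ≠ 1 by decide), map_zero, mul_zero,
          add_zero, e2_X0, Polynomial.derivative_C, mul_zero, add_zero]
      · rw [show ((⟨1, by omega⟩ : Fin 2)) = (1 : Fin 2) from rfl,
          MvPolynomial.pderiv_X_self, map_one, mul_one, e2_X1, Polynomial.derivative_X,
          mul_one]

lemma squarefree_e2 {Γ : Poly2'} (hsf : Squarefree Γ) : Squarefree (e2 Γ) := by
  intro z hz
  have h1 : e2.symm z * e2.symm z ∣ Γ := by
    have := map_dvd e2.symm hz
    rwa [map_mul, AlgEquiv.symm_apply_apply] at this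
  have h2 := (hsf _ h1).map (e2 : Poly2' →ₐ[ℂ] Polynomial (Polynomial ℂ))
  rwa [show (e2 : Poly2' →ₐ[ℂ] Polynomial (Polynomial ℂ)) (e2.symm z)
    = e2 (e2.symm z) from rfl, AlgEquiv.apply_symm_apply] at h2

/-- A nonzero univariate complex polynomial does not vanish on a Laurent series
of nonzero order. -/
lemma aeval_ne_zero_K (ξ : K) (hξ : ξ ≠ 0) (hord : ξ.order ≠ 0)
    (d : Polynomial ℂ) (hd : d ≠ 0) : Polynomial.aeval ξ d ≠ 0 := by
  intro h0
  have hsplit : d.Splits := IsAlgClosed.splits d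
  have hd2 := hsplit.eq_prod_roots
  rw [hd2, map_mul, map_multiset_prod, Polynomial.aeval_C] at h0
  rcases mul_eq_zero.mp h0 with h1 | h2
  · have : d.leadingCoeff = 0 := by
      have hinj : Function.Injective (algebraMap ℂ K) := (algebraMap ℂ K).injective
      exact hinj (by rw [h1, map_zero])
    exact (Polynomial.leadingCoeff_ne_zero.mpr hd) this
  · rw [Multiset.map_map] at h2
    obtain ⟨z, hz, hz0⟩ := Multiset.mem_map.mp (Multiset.prod_eq_zero_iff.mp h2)
    simp only [Function.comp_apply, map_sub, Polynomial.aeval_X, Polynomial.aeval_C] at hz0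
    have hξz : ξ = algebraMap ℂ K z := by
      have := sub_eq_zero.mp hz0
      exact this
    rcases eq_or_ne z 0 with rfl | hzne
    · rw [map_zero] at hξz; exact hξ hξz
    · apply hord
      rw [hξz, algebraMap_K]
      exact HahnSeries.order_single hzne


abbrev A := Polynomial ℂ
abbrev F := RatFunc ℂ

set_option maxHeartbeats 1000000 in
lemma theta_derivative_ne_zero (θ : Polynomial (Polynomial ℂ) →+* K)
    (hconst : ∀ d : Polynomial ℂ, d ≠ 0 → θ (Polynomial.C d) ≠ 0)
    (Γ' : Polynomial (Polynomial ℂ)) (hΓne : Γ' ≠ 0) (hsf : Squarefree Γ')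
    (hΓ0 : θ Γ' = 0) : θ (Polynomial.derivative Γ') ≠ 0 := by
  intro hG0
  classical
  -- find a prime factor h of Γ' with θ h = 0
  obtain ⟨fs, hfs, hassoc⟩ := UniqueFactorizationMonoid.exists_prime_factors Γ' hΓne
  have hprod0 : (fs.map θ).prod = 0 := by
    obtain ⟨u, hu⟩ := hassoc
    have : θ fs.prod * θ (u : Polynomial (Polynomial ℂ)) = 0 := by
      rw [← map_mul, hu, hΓ0]
    rcases mul_eq_zero.mp this with h1 | h2
    · rw [← map_multiset_prod]; exact h1
    · exfalso
      exact (u.isUnit.map θ).ne_zero h2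
  obtain ⟨h, hhfs, hθh⟩ := Multiset.mem_map.mp (Multiset.prod_eq_zero_iff.mp hprod0)
  have hprime : Prime h := hfs h hhfs
  have hdvdΓ : h ∣ Γ' := (Multiset.dvd_prod hhfs).trans hassoc.dvd
  -- h is nonconstant
  have hdeg : 0 < h.degree := by
    by_contra hle
    push_neg at hle
    have hC := Polynomial.eq_C_of_degree_le_zero hle
    have hc0 : h.coeff 0 ≠ 0 := by
      intro h0; rw [h0, map_zero] at hC; exact hprime.ne_zero hC
    exact hconst _ hc0 (by rw [← hC]; exact hθh)
  by_cases hcase : h ∣ Polynomial.derivative Γ'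
  · -- squarefree contradiction
    obtain ⟨g, hg⟩ := hdvdΓ
    have hdvd2 : h ∣ Polynomial.derivative h * g := by
      have hd : Polynomial.derivative Γ' =
          Polynomial.derivative h * g + h * Polynomial.derivative g := by
        rw [hg, Polynomial.derivative_mul]
      rw [hd] at hcase
      have h5 := dvd_sub hcase (dvd_mul_right h (Polynomial.derivative g))
      simpa using h5
    rcases hprime.dvd_mul.mp hdvd2 with h1 | h2
    · have hdh : Polynomial.derivative h ≠ 0 := by
        intro h0
        have := Polynomial.natDegree_eq_zero_of_derivative_eq_zero h0
        exact absurd (Polynomial.natDegree_pos_iff_degree_pos.mpr hdeg) (by omega)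
      have hled := Polynomial.degree_le_of_dvd h1 hdh
      have hlt := Polynomial.degree_derivative_lt (p := h) hprime.ne_zero
      exact absurd hled (not_le.mpr hlt)
    · have : h * h ∣ Γ' := by rw [hg]; exact mul_dvd_mul_left h h2
      exact hprime.not_unit (hsf h this)
  · -- Bezout contradiction over ℂ(x)
    set hF := Polynomial.map (algebraMap A F) h with hhF
    set GF := Polynomial.map (algebraMap A F) (Polynomial.derivative Γ') with hGF
    have hinj : Function.Injective (algebraMap A F) := IsFractionRing.injective A F
    have hirr : Irreducible h := hprime.irreducible
    have hprim : h.IsPrimitive := by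
      intro r hr
      obtain ⟨s, hs⟩ := hr
      rcases eq_or_ne r 0 with rfl | hrne
      · exfalso; rw [map_zero, zero_mul] at hs; exact hprime.ne_zero hs
      rcases hirr.isUnit_or_isUnit hs with hu1 | hu2
      · exact Polynomial.isUnit_C.mp hu1
      · exfalso
        have hds : s.degree = 0 := Polynomial.degree_eq_zero_of_isUnit hu2
        rw [hs, Polynomial.degree_mul, Polynomial.degree_C hrne, hds] at hdeg
        simp at hdeg
    have hFirr : Irreducible hF :=
      (Polynomial.IsPrimitive.irreducible_iff_irreducible_map_fraction_map hprim).mp hirr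
    have hFnotdvd : ¬ hF ∣ GF := by
      rintro ⟨T, hT⟩
      obtain ⟨bb, hbb⟩ :=
        IsLocalization.integerNormalization_map_to_map (nonZeroDivisors A) T
      set T₀ := IsLocalization.integerNormalization (nonZeroDivisors A) T with hT₀
      have key : h * T₀ = Polynomial.C (bb : A) * Polynomial.derivative Γ' := by
        apply Polynomial.map_injective _ hinj
        rw [Polynomial.map_mul, Polynomial.map_mul, Polynomial.map_C, hbb]
        rw [show Polynomial.map (algebraMap A F) (Polynomial.derivative Γ') = GF from rfl, hT]
        rw [show ((bb : A) • T : Polynomial F)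
            = Polynomial.C (algebraMap A F (bb : A)) * T by
          rw [← Polynomial.smul_eq_C_mul, algebraMap_smul]]
        ring
      have hdvd3 : h ∣ Polynomial.C (bb : A) * Polynomial.derivative Γ' :=
        ⟨T₀, by rw [key]⟩
      rcases hprime.dvd_mul.mp hdvd3 with h1 | h2
      · have hCne : (Polynomial.C (bb : A) : Polynomial A) ≠ 0 := by
          rw [Ne, Polynomial.C_eq_zero]
          exact nonZeroDivisors.coe_ne_zero bb
        have := Polynomial.degree_le_of_dvd h1 hCne
        rw [Polynomial.degree_C (nonZeroDivisors.coe_ne_zero bb)] at this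
        exact absurd hdeg (not_lt.mpr this)
      · exact hcase h2
    have hcop : IsCoprime hF GF := by
      rw [← EuclideanDomain.gcd_isUnit_iff]
      have hdvd1 : EuclideanDomain.gcd hF GF ∣ hF := EuclideanDomain.gcd_dvd_left _ _
      have hdvd2 : EuclideanDomain.gcd hF GF ∣ GF := EuclideanDomain.gcd_dvd_right _ _
      obtain ⟨ee, he⟩ := hdvd1
      rcases hFirr.isUnit_or_isUnit he with h1 | h2
      · exact h1
      · exfalso
        apply hFnotdvd
        have hassoc2 : Associated (EuclideanDomain.gcd hF GF) hF :=
          ⟨h2.unit, by rw [h2.unit_spec]; exact he.symm⟩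
        exact (hassoc2.symm.dvd).trans hdvd2
    obtain ⟨s, t, hst⟩ := hcop
    -- build the evaluation of F[y] into K
    have hθC : Function.Injective (θ.comp (Polynomial.C : A →+* Polynomial A)) := by
      rw [injective_iff_map_eq_zero]
      intro d hd
      by_contra hne0
      exact hconst d hne0 hd
    have heq : (Polynomial.eval₂RingHom (IsFractionRing.lift hθC) (θ Polynomial.X)).comp
        (Polynomial.mapRingHom (algebraMap A F)) = θ := by
      apply Polynomial.ringHom_ext
      · intro aa
        rw [RingHom.comp_apply, Polynomial.coe_mapRingHom, Polynomial.map_C,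
          Polynomial.coe_eval₂RingHom, Polynomial.eval₂_C]
        have h3 := IsFractionRing.lift_algebraMap (K := F) hθC aa
        rw [h3]
        rfl
      · rw [RingHom.comp_apply, Polynomial.coe_mapRingHom, Polynomial.map_X,
          Polynomial.coe_eval₂RingHom, Polynomial.eval₂_X]
    set Θ : Polynomial F →+* K :=
      Polynomial.eval₂RingHom (IsFractionRing.lift hθC) (θ Polynomial.X) with hΘ
    have hΘmap : ∀ P : Polynomial A, Θ (Polynomial.map (algebraMap A F) P) = θ P := by
      intro P
      rw [show Θ (Polynomial.map (algebraMap A F) P)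
          = (Θ.comp (Polynomial.mapRingHom (algebraMap A F))) P from rfl, hΘ, heq]
    have hfinal := congrArg Θ hst
    rw [map_add, map_mul, map_mul, map_one, hΘmap h, hΘmap (Polynomial.derivative Γ'),
      hθh, hG0, mul_zero, mul_zero, add_zero] at hfinal
    exact zero_ne_one hfinal


/-- The evaluation of `(ℂ[x])[y]` along the branch. -/
def Φmap (ξ η : K) : Polynomial (Polynomial ℂ) →+* K :=
  ((MvPolynomial.aeval (γv ξ η) : Poly2' →ₐ[ℂ] K).toRingHom).comp
    (e2.symm.toAlgHom.toRingHom)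

lemma Φmap_e2 (ξ η : K) (P : Poly2') :
    Φmap ξ η (e2 P) = MvPolynomial.aeval (γv ξ η) P := by
  rw [Φmap, RingHom.comp_apply]
  rw [show (e2.symm.toAlgHom.toRingHom) (e2 P) = e2.symm (e2 P) from rfl,
    e2.symm_apply_apply]
  rfl

lemma Φmap_C (ξ η : K) (d : Polynomial ℂ) :
    Φmap ξ η (Polynomial.C d) = Polynomial.aeval ξ d := by
  have hext : (Φmap ξ η).comp (Polynomial.C : Polynomial ℂ →+* Polynomial (Polynomial ℂ))
      = (Polynomial.aeval ξ : Polynomial ℂ →ₐ[ℂ] K).toRingHom := by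
    apply Polynomial.ringHom_ext
    · intro a
      rw [RingHom.comp_apply]
      rw [show (Polynomial.C (Polynomial.C a) : Polynomial (Polynomial ℂ))
          = e2 (MvPolynomial.C a) by
        rw [show (MvPolynomial.C a : Poly2') = algebraMap ℂ _ a from rfl, AlgEquiv.commutes]
        rfl]
      rw [Φmap_e2, MvPolynomial.aeval_C]
      rw [show ((Polynomial.aeval ξ : Polynomial ℂ →ₐ[ℂ] K).toRingHom) (Polynomial.C a)
          = Polynomial.aeval ξ (Polynomial.C a) from rfl, Polynomial.aeval_C]
    · rw [RingHom.comp_apply, ← e2_X0, Φmap_e2, MvPolynomial.aeval_X]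
      rw [show ((Polynomial.aeval ξ : Polynomial ℂ →ₐ[ℂ] K).toRingHom) Polynomial.X
          = Polynomial.aeval ξ Polynomial.X from rfl, Polynomial.aeval_X]
      rfl
  exact RingHom.congr_fun hext d

end AlgDOPAux


open AlgDOPAux

/-- Lemma 3.3: if `(g,Γ)` is a solution of the `(1,w)`-AlgDOP problem over `ℂ`,
`w > 1`, and `Γ` has a local branch `(ξ,η)` (a pair of nonzero formal Laurent
series annihilating `Γ`) with `ord ξ = p > 0` and `ord η = q < 0`, then the
coefficient of the monomial `y` in `b` vanishes and `a` is a constant multiple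
of `x²`. -/
theorem branch_pos_neg_order (w : ℝ) (hw : 1 < w) (a b c Γ : Poly2 ℂ)
    (h : IsAlgDOP 1 w a b c Γ)
    (ξ η : LaurentSeries ℂ) (hξ : ξ ≠ 0) (hη : η ≠ 0)
    (hbranch : MvPolynomial.aeval (fun i : Fin 2 => if i = 0 then ξ else η) Γ = 0)
    (p q : ℤ) (hp : ξ.order = p) (hq : η.order = q) (hp0 : 0 < p) (hq0 : q < 0) :
    MvPolynomial.coeff (Finsupp.single 1 1) b = 0 ∧
    ∃ k : ℂ, a = C k * X 0 ^ 2 := by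
  classical
  obtain ⟨ha, hb, hc, hΔ, hsf, hdvdΔ, hr1, hr2⟩ := h
  have hφΓ : MvPolynomial.aeval (γv ξ η) Γ = 0 := hbranch
  -- values along the branch
  set A : K := MvPolynomial.aeval (γv ξ η) a with hA
  set B : K := MvPolynomial.aeval (γv ξ η) b with hB
  set Cc : K := MvPolynomial.aeval (γv ξ η) c with hCc
  set u : K := MvPolynomial.aeval (γv ξ η) (pderiv 0 Γ) with hu
  set v : K := MvPolynomial.aeval (γv ξ η) (pderiv 1 Γ) with hv
  have hvan : ∀ P : Poly2 ℂ, Γ ∣ P → MvPolynomial.aeval (γv ξ η) P = 0 := by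
    rintro P ⟨s, rfl⟩
    rw [map_mul, hφΓ, zero_mul]
  have hAu : A * u + B * v = 0 := by
    have h1 := hvan _ hr1
    rwa [map_add, map_mul, map_mul] at h1
  have hBu : B * u + Cc * v = 0 := by
    have h1 := hvan _ hr2
    rwa [map_add, map_mul, map_mul] at h1
  -- tangency relation
  have htan : u * D ξ + v * D η = 0 := by
    have h1 := D_aeval (γv ξ η) Γ
    rw [hφΓ, D_zero, γv_zero, γv_one, ← hu, ← hv] at h1
    exact h1.symm
  -- Γ is nonzero
  have hΓne : Γ ≠ 0 := by
    rintro rfl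
    rw [zero_dvd_iff] at hdvdΔ
    exact hΔ hdvdΔ
  -- v ≠ 0
  have hvne : v ≠ 0 := by
    have hconst : ∀ d : Polynomial ℂ, d ≠ 0 → Φmap ξ η (Polynomial.C d) ≠ 0 := by
      intro d hd
      rw [Φmap_C]
      exact aeval_ne_zero_K ξ hξ (by rw [hp]; exact hp0.ne') d hd
    have he2ne : e2 Γ ≠ 0 := by
      intro h0
      apply hΓne
      have := congrArg e2.symm h0
      rwa [AlgEquiv.symm_apply_apply, map_zero] at this
    have hmain := theta_derivative_ne_zero (Φmap ξ η) hconst (e2 Γ) he2ne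
      (squarefree_e2 hsf) (by rw [Φmap_e2]; exact hφΓ)
    rw [← e2_pderiv, Φmap_e2] at hmain
    exact hmain
  -- derivative orders
  obtain ⟨hDξne, hDξord⟩ := D_ne_zero_and_order hξ (by rw [hp]; exact hp0.ne')
  obtain ⟨hDηne, hDηord⟩ := D_ne_zero_and_order hη (by rw [hq]; exact hq0.ne)
  rw [hp] at hDξord
  rw [hq] at hDηord
  -- the two row relations along the branch
  have hrel1 : A * D η = B * D ξ := by
    apply mul_left_cancel₀ hvne
    linear_combination A * htan - D ξ * hAu
  have hrel2 : B * D η = Cc * D ξ := by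
    apply mul_left_cancel₀ hvne
    linear_combination B * htan - D ξ * hBu
  -- support bounds
  have hb1 : ∀ m ∈ b.support, m 1 ≤ 1 := by
    intro m hm
    have h1 := hb m hm
    by_contra h2
    push_neg at h2
    have h3 : (2:ℝ) ≤ (m 1 : ℝ) := by exact_mod_cast h2
    have h4 : (0:ℝ) ≤ (m 0 : ℝ) := Nat.cast_nonneg _
    nlinarith
  have hc2 : ∀ m ∈ c.support, m 1 ≤ 2 := by
    intro m hm
    have h1 := hc m hm
    by_contra h2
    push_neg at h2
    have h3 : (3:ℝ) ≤ (m 1 : ℝ) := by exact_mod_cast h2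
    have h4 : (0:ℝ) ≤ (m 0 : ℝ) := Nat.cast_nonneg _
    nlinarith
  have haclass : ∀ m ∈ a.support, (m 0 = 0 ∧ m 1 = 1) ∨ (m 1 = 0 ∧ m 0 ≤ 2) := by
    intro m hm
    have h1 := ha m hm
    rcases Nat.lt_or_ge (m 1) 1 with h2 | h2
    · right
      refine ⟨by omega, ?_⟩
      have h3 : (m 1 : ℝ) = 0 := by exact_mod_cast (by omega : m 1 = 0)
      have h4 : (m 0 : ℝ) ≤ 2 := by nlinarith
      exact_mod_cast h4
    · rcases Nat.lt_or_ge (m 1) 2 with h3 | h3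
      · left
        have h5 : m 1 = 1 := by omega
        refine ⟨?_, h5⟩
        have h6 : (m 1 : ℝ) = 1 := by exact_mod_cast h5
        have h7 : (m 0 : ℝ) < 1 := by nlinarith
        have h8 : m 0 < 1 := by exact_mod_cast (by nlinarith : (m 0 : ℝ) < 1)
        omega
      · exfalso
        have h5 : (2:ℝ) ≤ (m 1 : ℝ) := by exact_mod_cast h3
        have h6 : (0:ℝ) ≤ (m 0 : ℝ) := Nat.cast_nonneg _
        nlinarith
  -- Goal 1
  have goal1 : MvPolynomial.coeff (Finsupp.single 1 1) b = 0 := by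
    by_contra hβ
    have hm₀ : (Finsupp.single 1 1 : Fin 2 →₀ ℕ) ∈ b.support :=
      MvPolynomial.mem_support_iff.mpr hβ
    have hordm₀ : (Tm ξ η (Finsupp.single 1 1)).order = q := by
      rw [Tm_order ξ η hξ hη, hp, hq]
      simp
    have hmin : ∀ m ∈ b.support, m ≠ Finsupp.single 1 1 →
        (Tm ξ η (Finsupp.single 1 1)).order < (Tm ξ η m).order := by
      intro m hm hne
      rw [hordm₀, Tm_order ξ η hξ hη, hp, hq]
      have h1 : m 1 ≤ 1 := hb1 m hm
      rcases Nat.le_one_iff_eq_zero_or_eq_one.mp h1 with h2 | h2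
      · rw [h2]
        have h3 : (0:ℤ) ≤ (m 0 : ℤ) * p := mul_nonneg (by positivity) hp0.le
        push_cast
        linarith
      · rw [h2]
        have hm0 : m 0 ≠ 0 := by
          intro h0
          exact hne (by ext i; fin_cases i <;> simp [h0, h2])
        have h3 : (1:ℤ) ≤ (m 0 : ℤ) := by exact_mod_cast Nat.one_le_iff_ne_zero.mpr hm0
        have h4 : p ≤ (m 0 : ℤ) * p := le_mul_of_one_le_left hp0.le h3
        push_cast
        linarith
    obtain ⟨hBne, hBord⟩ := aeval_order_eq ξ η hξ hη b _ hm₀ hmin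
    rw [← hB] at hBne hBord
    rw [hordm₀] at hBord
    have hCne : Cc ≠ 0 := by
      intro h0
      rw [h0, zero_mul] at hrel2
      exact mul_ne_zero hBne hDηne hrel2
    have hordeq : B.order + (D η).order = Cc.order + (D ξ).order := by
      rw [← HahnSeries.order_mul hBne hDηne, ← HahnSeries.order_mul hCne hDξne, hrel2]
    have hClb : (2*q : ℤ) ≤ Cc.order := by
      rw [hCc]
      apply aeval_order_ge ξ η hξ hη c (2*q) ?_ (by rw [← hCc]; exact hCne)
      intro m hm
      rw [Tm_order ξ η hξ hη, hp, hq]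
      have h1 : m 1 ≤ 2 := hc2 m hm
      have h2 : (0:ℤ) ≤ (m 0 : ℤ) * p := mul_nonneg (by positivity) hp0.le
      have h3 : 2 * q ≤ ((m 1 : ℤ)) * q := by
        have h4 : (m 1 : ℤ) ≤ 2 := by exact_mod_cast h1
        nlinarith
      linarith
    rw [hBord, hDηord, hDξord] at hordeq
    omega
  refine ⟨goal1, ?_⟩
  -- Goal 2
  have hBlb_supp : ∀ m ∈ b.support, min 0 (p+q) ≤ (Tm ξ η m).order := by
    intro m hm
    rw [Tm_order ξ η hξ hη, hp, hq]
    have h1 : m 1 ≤ 1 := hb1 m hm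
    rcases Nat.le_one_iff_eq_zero_or_eq_one.mp h1 with h2 | h2
    · rw [h2]
      have h3 : (0:ℤ) ≤ (m 0 : ℤ) * p := mul_nonneg (by positivity) hp0.le
      have h5 : min 0 (p+q) ≤ 0 := min_le_left _ _
      push_cast
      linarith
    · rw [h2]
      have hm0 : m 0 ≠ 0 := by
        intro h0
        have : m = Finsupp.single 1 1 := by ext i; fin_cases i <;> simp [h0, h2]
        rw [this] at hm
        exact (MvPolynomial.mem_support_iff.mp hm) goal1
      have h3 : (1:ℤ) ≤ (m 0 : ℤ) := by exact_mod_cast Nat.one_le_iff_ne_zero.mpr hm0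
      have h4 : p ≤ (m 0 : ℤ) * p := le_mul_of_one_le_left hp0.le h3
      have h5 : min 0 (p+q) ≤ p + q := min_le_right _ _
      push_cast
      linarith
  by_cases hbig : ∀ m ∈ a.support, m = Finsupp.single 0 2
  · refine ⟨MvPolynomial.coeff (Finsupp.single 0 2) a, ?_⟩
    have hXpow : (C (MvPolynomial.coeff (Finsupp.single 0 2) a) * X 0 ^ 2 : Poly2 ℂ)
        = MvPolynomial.monomial (Finsupp.single 0 2)
            (MvPolynomial.coeff (Finsupp.single 0 2) a) := by
      rw [MvPolynomial.X_pow_eq_monomial, MvPolynomial.C_mul_monomial, mul_one]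
    rw [hXpow]
    apply MvPolynomial.ext
    intro n
    rw [MvPolynomial.coeff_monomial]
    rcases eq_or_ne (Finsupp.single (0 : Fin 2) 2) n with h1 | h1
    · rw [if_pos h1, h1]
    · rw [if_neg h1]
      by_contra h2
      exact h1 ((hbig n (MvPolynomial.mem_support_iff.mpr h2)).symm)
  · exfalso
    push_neg at hbig
    obtain ⟨m', hm'supp, hm'ne⟩ := hbig
    -- produce the exact order of A
    have key : ∃ oA : ℤ, A ≠ 0 ∧ A.order = oA ∧ oA ≤ p := by
      by_cases h01 : (Finsupp.single 1 1 : Fin 2 →₀ ℕ) ∈ a.support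
      · refine ⟨q, ?_⟩
        have hordm₀ : (Tm ξ η (Finsupp.single 1 1)).order = q := by
          rw [Tm_order ξ η hξ hη, hp, hq]; simp
        have hmin : ∀ m ∈ a.support, m ≠ Finsupp.single 1 1 →
            (Tm ξ η (Finsupp.single 1 1)).order < (Tm ξ η m).order := by
          intro m hm hne
          rw [hordm₀, Tm_order ξ η hξ hη, hp, hq]
          rcases haclass m hm with ⟨h2, h3⟩ | ⟨h2, h3⟩
          · exact absurd (by ext i; fin_cases i <;> simp [h2, h3]) hne
          · rw [h2]
            have h4 : (0:ℤ) ≤ (m 0 : ℤ) * p := mul_nonneg (by positivity) hp0.le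
            push_cast
            linarith
        obtain ⟨h5, h6⟩ := aeval_order_eq ξ η hξ hη a _ h01 hmin
        rw [← hA] at h5 h6
        rw [hordm₀] at h6
        exact ⟨h5, h6, by omega⟩
      by_cases h00 : (0 : Fin 2 →₀ ℕ) ∈ a.support
      · refine ⟨0, ?_⟩
        have hordm₀ : (Tm ξ η (0 : Fin 2 →₀ ℕ)).order = 0 := by
          rw [Tm_order ξ η hξ hη, hp, hq]; simp
        have hmin : ∀ m ∈ a.support, m ≠ (0 : Fin 2 →₀ ℕ) →
            (Tm ξ η (0 : Fin 2 →₀ ℕ)).order < (Tm ξ η m).order := by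
          intro m hm hne
          rw [hordm₀, Tm_order ξ η hξ hη, hp, hq]
          rcases haclass m hm with ⟨h2, h3⟩ | ⟨h2, h3⟩
          · exact absurd (by rwa [show m = Finsupp.single 1 1 by
              ext i; fin_cases i <;> simp [h2, h3]] at hm) h01
          · rw [h2]
            have hm0 : m 0 ≠ 0 := by
              intro h0
              exact hne (by ext i; fin_cases i <;> simp [h0, h2])
            have h3' : (1:ℤ) ≤ (m 0 : ℤ) := by
              exact_mod_cast Nat.one_le_iff_ne_zero.mpr hm0
            have h4 : p ≤ (m 0 : ℤ) * p := le_mul_of_one_le_left hp0.le h3'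
            push_cast
            linarith
        obtain ⟨h5, h6⟩ := aeval_order_eq ξ η hξ hη a _ h00 hmin
        rw [← hA] at h5 h6
        rw [hordm₀] at h6
        exact ⟨h5, h6, by omega⟩
      by_cases h10 : (Finsupp.single 0 1 : Fin 2 →₀ ℕ) ∈ a.support
      · refine ⟨p, ?_⟩
        have hordm₀ : (Tm ξ η (Finsupp.single 0 1)).order = p := by
          rw [Tm_order ξ η hξ hη, hp, hq]; simp
        have hmin : ∀ m ∈ a.support, m ≠ Finsupp.single 0 1 →
            (Tm ξ η (Finsupp.single 0 1)).order < (Tm ξ η m).order := by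
          intro m hm hne
          rw [hordm₀, Tm_order ξ η hξ hη, hp, hq]
          rcases haclass m hm with ⟨h2, h3⟩ | ⟨h2, h3⟩
          · exact absurd (by rwa [show m = Finsupp.single 1 1 by
              ext i; fin_cases i <;> simp [h2, h3]] at hm) h01
          · rw [h2]
            have hm0 : m 0 ≠ 0 := by
              intro h0
              exact h00 (by rwa [show m = (0 : Fin 2 →₀ ℕ) by
                ext i; fin_cases i <;> simp [h0, h2]] at hm)
            have hm1 : m 0 ≠ 1 := by
              intro h0
              exact hne (by ext i; fin_cases i <;> simp [h0, h2])
            have h3' : (2:ℤ) ≤ (m 0 : ℤ) := by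
              have : 2 ≤ m 0 := by omega
              exact_mod_cast this
            have h4 : 2 * p ≤ (m 0 : ℤ) * p := by nlinarith
            push_cast
            linarith
        obtain ⟨h5, h6⟩ := aeval_order_eq ξ η hξ hη a _ h10 hmin
        rw [← hA] at h5 h6
        rw [hordm₀] at h6
        exact ⟨h5, h6, le_refl p⟩
      · exfalso
        rcases haclass m' hm'supp with ⟨h2, h3⟩ | ⟨h2, h3⟩
        · exact h01 (by rwa [show m' = Finsupp.single 1 1 by
            ext i; fin_cases i <;> simp [h2, h3]] at hm'supp)
        · have hm0 : m' 0 = 0 ∨ m' 0 = 1 ∨ m' 0 = 2 := by omega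
          rcases hm0 with h4 | h4 | h4
          · exact h00 (by rwa [show m' = (0 : Fin 2 →₀ ℕ) by
              ext i; fin_cases i <;> simp [h4, h2]] at hm'supp)
          · exact h10 (by rwa [show m' = Finsupp.single 0 1 by
              ext i; fin_cases i <;> simp [h4, h2]] at hm'supp)
          · exact hm'ne (by ext i; fin_cases i <;> simp [h4, h2])
    obtain ⟨oA, hAne, hAord, hoAle⟩ := key
    have hBne : B ≠ 0 := by
      intro h0
      rw [h0, zero_mul] at hrel1
      exact mul_ne_zero hAne hDηne hrel1
    have hordeq : A.order + (D η).order = B.order + (D ξ).order := by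
      rw [← HahnSeries.order_mul hAne hDηne, ← HahnSeries.order_mul hBne hDξne, hrel1]
    have hBlb : min 0 (p+q) ≤ B.order := by
      rw [hB]
      exact aeval_order_ge ξ η hξ hη b (min 0 (p+q)) hBlb_supp (by rw [← hB]; exact hBne)
    rw [hAord, hDηord, hDξord] at hordeq
    omega
end
end

section
/- Let 1 < w ≤ 2 be real and let (g,Γ), with g = [[a,b],[b,c]], be a solution of the (1,w)-AlgDOP problem over ℂ. Suppose Γ has a local branch γ = (ξ,η) with ord ξ = 2 and ord η = 1. Then a(0,0) = 0, the coefficient of the monomial y in a vanishes, and b(0,0) = 0; consequently deg_y(ac − b²) ≤ 2. -/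
open MvPolynomial

noncomputable section

private lemma chainRule {A : Type*} [CommRing A] [Algebra ℂ A] (D : Derivation ℂ A A)
    (x : Fin 2 → A) (P : Poly2 ℂ) :
    D (aeval x P) = aeval x (pderiv 0 P) * D (x 0) + aeval x (pderiv 1 P) * D (x 1) := by
  induction P using MvPolynomial.induction_on with
  | C a => simp
  | add p q hp hq => simp only [map_add, hp, hq]; ring
  | mul_X p i hp =>
      fin_cases i <;>
      · simp only [map_mul, Derivation.leibniz, pderiv_mul, pderiv_X, aeval_X, map_add,
          smul_eq_mul, hp]
        simp [Pi.single_apply]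
        ring

private lemma aeval_ps_ne_zero (u : PowerSeries ℂ)
    (hu0 : PowerSeries.constantCoeff u = 0) (hu : u ≠ 0) {s : Polynomial ℂ} (hs : s ≠ 0) :
    Polynomial.aeval u s ≠ 0 := by
  intro h
  have hsplit : s.Splits := IsAlgClosed.splits s
  rw [hsplit.eq_prod_roots, map_mul, Polynomial.aeval_C,
    map_multiset_prod] at h
  rcases mul_eq_zero.mp h with h1 | h2
  · exact hs (Polynomial.leadingCoeff_eq_zero.mp (by
      simpa using h1))
  · obtain ⟨z, hz, hz0⟩ := Multiset.mem_map.mp (Multiset.prod_eq_zero_iff.mp h2)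
    obtain ⟨r, hr, rfl⟩ := Multiset.mem_map.mp hz
    rw [map_sub, Polynomial.aeval_X, Polynomial.aeval_C, sub_eq_zero] at hz0
    apply hu
    rw [hz0] at hu0 ⊢
    have : r = 0 := by simpa using hu0
    simp [this]


set_option maxHeartbeats 800000 in
set_option synthInstance.maxHeartbeats 400000 in
private lemma keyV {T : Type*} [CommRing T] [IsDomain T]
    (φ : Polynomial (Polynomial ℂ) →+* T)
    (h1 : ∀ s : Polynomial ℂ, φ (Polynomial.C s) = 0 → s = 0)
    (G : Polynomial (Polynomial ℂ)) (hsf : Squarefree G) (hG : φ G = 0) :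
    φ (Polynomial.derivative G) ≠ 0 := by
  intro hder
  have hGne : G ≠ 0 := fun h => not_squarefree_zero (h ▸ hsf)
  -- an irreducible factor in the kernel
  obtain ⟨q, hqmem, hq0⟩ : ∃ q ∈ UniqueFactorizationMonoid.factors G, φ q = 0 := by
    obtain ⟨u, hu⟩ := UniqueFactorizationMonoid.factors_prod hGne
    have h2 : φ ((UniqueFactorizationMonoid.factors G).prod) * φ (u : Polynomial (Polynomial ℂ))
        = 0 := by rw [← map_mul, hu, hG]
    have hu' : φ (u : Polynomial (Polynomial ℂ)) ≠ 0 := (u.isUnit.map φ).ne_zero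
    have h3 : φ ((UniqueFactorizationMonoid.factors G).prod) = 0 :=
      (mul_eq_zero.mp h2).resolve_right hu'
    rw [← Multiset.prod_hom _ φ] at h3
    obtain ⟨q, hq, hq0⟩ := Multiset.mem_map.mp (Multiset.prod_eq_zero_iff.mp h3)
    exact ⟨q, hq, hq0⟩
  have hqirr : Irreducible q := UniqueFactorizationMonoid.irreducible_of_factor q hqmem
  have hqdvd : q ∣ G := UniqueFactorizationMonoid.dvd_of_mem_factors hqmem
  have hdeg : q.natDegree ≠ 0 := by
    intro h0
    have hqc : q = Polynomial.C (q.coeff 0) := Polynomial.eq_C_of_natDegree_eq_zero h0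
    have : q.coeff 0 = 0 := h1 _ (by rw [← hqc]; exact hq0)
    exact hqirr.ne_zero (by rw [hqc, this, map_zero])
  -- q is primitive
  have hprim : q.IsPrimitive := by
    intro r hr
    obtain ⟨t, rfl⟩ := hr
    rcases hqirr.isUnit_or_isUnit rfl with h | h
    · exact Polynomial.isUnit_C.mp h
    · exfalso
      apply hdeg
      have h1' := Polynomial.natDegree_eq_zero_of_isUnit h
      have := Polynomial.natDegree_mul_le (p := Polynomial.C r) (q := t)
      simp [h1'] at this
      omega
  -- every element of the kernel is divisible by q
  have claim : ∀ r, φ r = 0 → q ∣ r := by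
    intro r hr
    rcases eq_or_ne r 0 with rfl | hrne
    · exact dvd_zero q
    by_contra hndvd
    haveI : IsPrincipalIdealRing (Polynomial (FractionRing (Polynomial ℂ))) :=
      EuclideanDomain.to_principal_ideal_domain (R := Polynomial (FractionRing (Polynomial ℂ)))
    -- reduce to the primitive part of r
    have hcont : φ (Polynomial.C r.content) ≠ 0 := by
      intro h
      exact (Polynomial.content_eq_zero_iff.not.mpr hrne) (h1 _ h)
    have hrp0 : φ r.primPart = 0 := by
      have := r.eq_C_content_mul_primPart
      have h2 : φ (Polynomial.C r.content) * φ r.primPart = 0 := by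
        rw [← map_mul, ← this, hr]
      exact (mul_eq_zero.mp h2).resolve_left hcont
    have hndvdp : ¬ q ∣ r.primPart := fun hd => hndvd (hd.trans r.primPart_dvd)
    have hqbar : Irreducible (q.map (algebraMap (Polynomial ℂ) (FractionRing (Polynomial ℂ)))) :=
      (hprim.irreducible_iff_irreducible_map_fraction_map (K := FractionRing (Polynomial ℂ))).mp hqirr
    have hndvd' : ¬ q.map (algebraMap (Polynomial ℂ) (FractionRing (Polynomial ℂ))) ∣ r.primPart.map (algebraMap (Polynomial ℂ) (FractionRing (Polynomial ℂ))) := fun hd =>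
      hndvdp ((hprim.dvd_iff_fraction_map_dvd_fraction_map (FractionRing (Polynomial ℂ)) (q := r.primPart)).mpr hd)
    obtain ⟨u, v, huv⟩ := (hqbar.coprime_iff_not_dvd.mpr hndvd')
    set M := nonZeroDivisors (Polynomial ℂ)
    obtain ⟨bu, hbu⟩ := IsLocalization.integerNormalization_map_to_map M u
    obtain ⟨bv, hbv⟩ := IsLocalization.integerNormalization_map_to_map M v
    set U := IsLocalization.integerNormalization M u
    set V := IsLocalization.integerNormalization M v
    set W := Polynomial.C (bv : Polynomial ℂ) * U * q
        + Polynomial.C (bu : Polynomial ℂ) * V * r.primPart with hW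
    have hWmap : W.map (algebraMap (Polynomial ℂ) (FractionRing (Polynomial ℂ))) = Polynomial.C ((algebraMap (Polynomial ℂ) (FractionRing (Polynomial ℂ))) ((bv : Polynomial ℂ) * (bu : Polynomial ℂ))) := by
      have : W.map (algebraMap (Polynomial ℂ) (FractionRing (Polynomial ℂ))) = Polynomial.C ((algebraMap (Polynomial ℂ) (FractionRing (Polynomial ℂ))) (bv : Polynomial ℂ)) * (U.map (algebraMap (Polynomial ℂ) (FractionRing (Polynomial ℂ)))) * (q.map (algebraMap (Polynomial ℂ) (FractionRing (Polynomial ℂ))))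
          + Polynomial.C ((algebraMap (Polynomial ℂ) (FractionRing (Polynomial ℂ))) (bu : Polynomial ℂ)) * (V.map (algebraMap (Polynomial ℂ) (FractionRing (Polynomial ℂ)))) * (r.primPart.map (algebraMap (Polynomial ℂ) (FractionRing (Polynomial ℂ)))) := by
        simp [hW, Polynomial.map_add, Polynomial.map_mul, Polynomial.map_C]
      rw [this, hbu, hbv]
      have hsm : ∀ (b : Polynomial ℂ) (p : Polynomial (FractionRing (Polynomial ℂ))),
          b • p = Polynomial.C (algebraMap (Polynomial ℂ) (FractionRing (Polynomial ℂ)) b) * p :=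
        fun b p => by
          rw [← IsScalarTower.algebraMap_smul (FractionRing (Polynomial ℂ)) b p,
            Polynomial.smul_eq_C_mul]
      rw [hsm, hsm, map_mul, map_mul]
      linear_combination (Polynomial.C ((algebraMap (Polynomial ℂ) (FractionRing (Polynomial ℂ)))
        ↑bu) * Polynomial.C ((algebraMap (Polynomial ℂ) (FractionRing (Polynomial ℂ))) ↑bv)) * huv
    have hWeq : W = Polynomial.C ((bv : Polynomial ℂ) * (bu : Polynomial ℂ)) := by
      apply Polynomial.map_injective (algebraMap (Polynomial ℂ) (FractionRing (Polynomial ℂ))) (IsFractionRing.injective (Polynomial ℂ) (FractionRing (Polynomial ℂ)))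
      rw [hWmap, Polynomial.map_C]
    have hφW : φ W = 0 := by
      rw [hW]
      simp [map_add, map_mul, hq0, hrp0]
    rw [hWeq] at hφW
    have := h1 _ hφW
    rcases mul_eq_zero.mp this with h | h
    · exact nonZeroDivisors.ne_zero bv.2 h
    · exact nonZeroDivisors.ne_zero bu.2 h
  -- finish: q divides its own derivative
  have hqdG : q ∣ Polynomial.derivative G := claim _ hder
  obtain ⟨s, rfl⟩ := hqdvd
  have hqns : ¬ q ∣ s := by
    rintro ⟨t, rfl⟩
    exact hqirr.not_isUnit (hsf q ⟨t, by ring⟩)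
  have hqprime : Prime q := UniqueFactorizationMonoid.irreducible_iff_prime.mp hqirr
  rw [Polynomial.derivative_mul] at hqdG
  have h5 : q ∣ Polynomial.derivative q * s := (dvd_add_right (Dvd.intro _ rfl)).mp
    (by rwa [add_comm] at hqdG)
  have h6 : q ∣ Polynomial.derivative q := (hqprime.dvd_mul.mp h5).resolve_right hqns
  have hdq : Polynomial.derivative q = 0 := by
    by_contra hne
    exact absurd (Polynomial.degree_le_of_dvd h6 hne)
      (not_le.mpr (Polynomial.degree_derivative_lt hqirr.ne_zero))
  exact hdeg (Polynomial.natDegree_eq_zero_of_derivative_eq_zero hdq)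


private def e2 : Poly2 ℂ →ₐ[ℂ] Polynomial (Polynomial ℂ) :=
  aeval (fun i => if i = 0 then Polynomial.C Polynomial.X else Polynomial.X)

private def e2inv : Polynomial (Polynomial ℂ) →ₐ[ℂ] Poly2 ℂ :=
  Polynomial.aevalTower (Polynomial.aeval (X 0)) (X 1)

private lemma e2_toX (s : Polynomial ℂ) : e2 (Polynomial.aeval (X 0) s) = Polynomial.C s := by
  have h : (e2.comp (Polynomial.aeval (X 0) : Polynomial ℂ →ₐ[ℂ] Poly2 ℂ)) =
      ((Polynomial.CAlgHom : Polynomial ℂ →ₐ[ℂ] Polynomial (Polynomial ℂ))) := by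
    apply Polynomial.algHom_ext
    simp [e2, Polynomial.CAlgHom]
  exact DFunLike.congr_fun h s

private lemma e2inv_e2 (P : Poly2 ℂ) : e2inv (e2 P) = P := by
  have h : e2inv.comp e2 = AlgHom.id ℂ (Poly2 ℂ) := by
    apply MvPolynomial.algHom_ext
    intro i
    fin_cases i <;> simp [e2, e2inv]
  exact DFunLike.congr_fun h P

private lemma e2_e2inv (P : Polynomial (Polynomial ℂ)) : e2 (e2inv P) = P := by
  induction P using Polynomial.induction_on' with
  | add p q hp hq => simp [map_add, hp, hq]
  | monomial n r =>
      rw [← Polynomial.C_mul_X_pow_eq_monomial]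
      simp only [map_mul, map_pow, e2inv, Polynomial.aevalTower_C, Polynomial.aevalTower_X]
      rw [e2_toX]
      simp [e2]

private def eqv : Poly2 ℂ ≃ₐ[ℂ] Polynomial (Polynomial ℂ) :=
  AlgEquiv.ofAlgHom e2 e2inv (AlgHom.ext e2_e2inv) (AlgHom.ext e2inv_e2)

private lemma e2_pderiv (P : Poly2 ℂ) :
    e2 (pderiv 1 P) = Polynomial.derivative (e2 P) := by
  induction P using MvPolynomial.induction_on with
  | C a => simp [e2]
  | add p q hp hq => simp [map_add, hp, hq]
  | mul_X p i hp =>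
      have hX0 : e2 (X 0) = Polynomial.C Polynomial.X := by simp [e2]
      have hX1 : e2 (X 1) = Polynomial.X := by simp [e2]
      fin_cases i
      · show e2 ((pderiv 1) (p * X 0)) = Polynomial.derivative (e2 (p * X 0))
        rw [pderiv_mul, pderiv_X_of_ne (by decide), map_add, map_mul, map_mul, hp, hX0,
          map_zero, mul_zero, add_zero, map_mul, hX0, Polynomial.derivative_mul,
          Polynomial.derivative_C, mul_zero, add_zero]
      · show e2 ((pderiv 1) (p * X 1)) = Polynomial.derivative (e2 (p * X 1))
        rw [pderiv_mul, pderiv_X_self, map_add, map_mul, map_mul, hp, hX1, map_one, mul_one,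
          map_mul, hX1, Polynomial.derivative_mul, Polynomial.derivative_X, mul_one]

private lemma squarefree_eqv {Γ : Poly2 ℂ} (h : Squarefree Γ) : Squarefree (eqv Γ) := by
  intro x hx
  have hd : eqv.symm x * eqv.symm x ∣ Γ := by
    have := map_dvd eqv.symm hx
    simpa using this
  have := h _ hd
  have := this.map eqv.toAlgHom
  simpa using this


private lemma EV_expand (ξ₀ η₀ : PowerSeries ℂ) (P : Poly2 ℂ) :
    aeval (fun i : Fin 2 => if i = 0 then ξ₀ else η₀) P =
      ∑ m ∈ P.support, PowerSeries.C (coeff m P) * ξ₀ ^ (m 0) * η₀ ^ (m 1) := by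
  rw [aeval_def, eval₂_eq']
  refine Finset.sum_congr rfl fun m _ => ?_
  rw [Fin.prod_univ_two]
  simp [PowerSeries.algebraMap_apply, mul_assoc]

private lemma EV_coeff_zero (ξ₀ η₀ : PowerSeries ℂ)
    (hx0 : PowerSeries.constantCoeff ξ₀ = 0) (hy0 : PowerSeries.constantCoeff η₀ = 0)
    (P : Poly2 ℂ) :
    PowerSeries.constantCoeff (aeval (fun i : Fin 2 => if i = 0 then ξ₀ else η₀) P)
      = constantCoeff P := by
  rw [EV_expand, map_sum]
  rw [Finset.sum_eq_single (0 : Fin 2 →₀ ℕ)]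
  · simp [constantCoeff_eq]
  · intro m hm hne
    have : m 0 ≠ 0 ∨ m 1 ≠ 0 := by
      by_contra hc
      push_neg at hc
      exact hne (by ext i; fin_cases i <;> simp [hc.1, hc.2])
    rcases this with h | h <;>
      simp [map_mul, map_pow, hx0, hy0, zero_pow h]
  · intro h0
    simp [MvPolynomial.notMem_support_iff.mp h0, constantCoeff_eq]

private lemma EV_coeff_one (ξ₀ η₀ : PowerSeries ℂ)
    (hx0 : PowerSeries.constantCoeff ξ₀ = 0) (hx1 : PowerSeries.coeff 1 ξ₀ = 0)
    (hy0 : PowerSeries.constantCoeff η₀ = 0) (P : Poly2 ℂ) :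
    PowerSeries.coeff 1 (aeval (fun i : Fin 2 => if i = 0 then ξ₀ else η₀) P)
      = coeff (Finsupp.single 1 1) P * PowerSeries.coeff 1 η₀ := by
  have hX2ξ : (PowerSeries.X : PowerSeries ℂ)^2 ∣ ξ₀ := by
    rw [PowerSeries.X_pow_dvd_iff]
    intro m hm
    interval_cases m
    · simpa using hx0
    · simpa using hx1
  have hXη : (PowerSeries.X : PowerSeries ℂ) ∣ η₀ := PowerSeries.X_dvd_iff.mpr hy0
  rw [EV_expand, map_sum]
  rw [Finset.sum_eq_single (Finsupp.single 1 1 : Fin 2 →₀ ℕ)]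
  · simp [PowerSeries.coeff_C_mul]
  · intro m hm hne
    rcases Nat.eq_zero_or_pos (m 0) with h0 | h0
    · rcases Nat.lt_or_ge (m 1) 2 with h1 | h1
      · -- m 1 ≤ 1, m 0 = 0, m ≠ single 1 1 ⟹ m = 0
        interval_cases h : (m 1)
        · have : m = 0 := by ext i; fin_cases i <;> simp [h0, h]
          rw [this]
          simp
        · exfalso
          exact hne (by ext i; fin_cases i <;> simp [h0, h])
      · -- X^2 divides η₀ ^ (m 1)
        have hd2 : (PowerSeries.X : PowerSeries ℂ)^2 ∣ η₀ ^ (m 1) :=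
          (pow_dvd_pow_of_dvd hXη 2).trans (pow_dvd_pow η₀ h1)
        have hdvd : (PowerSeries.X : PowerSeries ℂ)^2 ∣
            PowerSeries.C (coeff m P) * ξ₀ ^ (m 0) * η₀ ^ (m 1) :=
          hd2.mul_left _
        rw [PowerSeries.X_pow_dvd_iff] at hdvd
        exact hdvd 1 (by norm_num)
    · have hdvd : (PowerSeries.X : PowerSeries ℂ)^2 ∣
          PowerSeries.C (coeff m P) * ξ₀ ^ (m 0) * η₀ ^ (m 1) :=
        ((hX2ξ.trans (dvd_pow_self ξ₀ h0.ne')).mul_left _).mul_right _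
      rw [PowerSeries.X_pow_dvd_iff] at hdvd
      exact hdvd 1 (by norm_num)
  · intro h0
    simp [MvPolynomial.notMem_support_iff.mp h0]


set_option maxHeartbeats 1600000 in
set_option synthInstance.maxHeartbeats 400000 in
/-- Lemma 3.4(a): if `(g,Γ)` is a solution of the `(1,w)`-AlgDOP problem over `ℂ`,
`1 < w ≤ 2`, and `Γ` has a local branch `(ξ,η)` with `ord ξ = 2`, `ord η = 1`,
then `a(0,0) = 0`, the coefficient of the monomial `y` in `a` vanishes, and
`b(0,0) = 0`; consequently `deg_y (ac − b²) ≤ 2`. -/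
theorem branch_order_two_one (w : ℝ) (hw1 : 1 < w) (hw2 : w ≤ 2) (a b c Γ : Poly2 ℂ)
    (h : IsAlgDOP 1 w a b c Γ)
    (ξ η : LaurentSeries ℂ) (hξ : ξ ≠ 0) (hη : η ≠ 0)
    (hbranch : MvPolynomial.aeval (fun i : Fin 2 => if i = 0 then ξ else η) Γ = 0)
    (hp : ξ.order = 2) (hq : η.order = 1) :
    constantCoeff a = 0 ∧
    MvPolynomial.coeff (Finsupp.single 1 1) a = 0 ∧
    constantCoeff b = 0 ∧
    degreeOf 1 (a * c - b ^ 2) ≤ 2 := by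
  obtain ⟨hwa, hwb, hwc, hΔ, hsf, hdvdΔ, hA31, hA32⟩ := h
  set ξ₀ : PowerSeries ℂ := PowerSeries.X ^ 2 * ξ.powerSeriesPart with hxdef
  set η₀ : PowerSeries ℂ := PowerSeries.X ^ 1 * η.powerSeriesPart with hydef
  have hξc : ((ξ₀ : PowerSeries ℂ) : LaurentSeries ℂ) = ξ :=
    LaurentSeries.X_order_mul_powerSeriesPart (by rw [hp]; norm_num)
  have hηc : ((η₀ : PowerSeries ℂ) : LaurentSeries ℂ) = η :=
    LaurentSeries.X_order_mul_powerSeriesPart (by rw [hq]; norm_num)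
  have hcoe : ∀ (u : PowerSeries ℂ) (n : ℕ),
      PowerSeries.coeff n u = ((u : LaurentSeries ℂ)).coeff (n : ℤ) := fun u n =>
    (HahnSeries.ofPowerSeries_apply_coeff u n).symm
  have hx0 : PowerSeries.constantCoeff ξ₀ = 0 := by
    rw [← PowerSeries.coeff_zero_eq_constantCoeff, hcoe, hξc]
    exact HahnSeries.coeff_eq_zero_of_lt_order (by rw [hp]; norm_num)
  have hx1 : PowerSeries.coeff 1 ξ₀ = 0 := by
    rw [hcoe, hξc]
    exact HahnSeries.coeff_eq_zero_of_lt_order (by rw [hp]; norm_num)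
  have hy0 : PowerSeries.constantCoeff η₀ = 0 := by
    rw [← PowerSeries.coeff_zero_eq_constantCoeff, hcoe, hηc]
    exact HahnSeries.coeff_eq_zero_of_lt_order (by rw [hq]; norm_num)
  have hy1 : PowerSeries.coeff 1 η₀ ≠ 0 := by
    rw [hcoe, hηc]
    have := HahnSeries.coeff_order_eq_zero.not.mpr hη
    rwa [hq] at this
  have hξ₀ne : ξ₀ ≠ 0 := by
    intro h0
    apply hξ
    rw [← hξc, h0, map_zero]
  -- transfer the branch condition to power series
  let F : PowerSeries ℂ →ₐ[ℂ] LaurentSeries ℂ :=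
    { HahnSeries.ofPowerSeries ℤ ℂ with
      commutes' := fun r => by
        simp only [RingHom.toMonoidHom_eq_coe, OneHom.toFun_eq_coe, MonoidHom.toOneHom_coe,
          MonoidHom.coe_coe]
        rw [PowerSeries.algebraMap_apply, HahnSeries.algebraMap_apply',
          PowerSeries.algebraMap_apply] }
  have hFapp : ∀ u : PowerSeries ℂ, F u = ((u : LaurentSeries ℂ)) := fun u => rfl
  have hbr : aeval (fun i : Fin 2 => if i = 0 then ξ₀ else η₀) Γ = 0 := by
    apply HahnSeries.ofPowerSeries_injective (Γ := ℤ) (R := ℂ)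
    have hcomp := MvPolynomial.comp_aeval
      (f := fun i : Fin 2 => if i = 0 then ξ₀ else η₀) (φ := F)
    have h5 := DFunLike.congr_fun hcomp Γ
    simp only [AlgHom.coe_comp, Function.comp_apply] at h5
    rw [map_zero]
    show F (aeval (fun i : Fin 2 => if i = 0 then ξ₀ else η₀) Γ) = 0
    have hfe : (fun i : Fin 2 => F (if i = 0 then ξ₀ else η₀))
        = fun i : Fin 2 => if i = 0 then ξ else η := by
      funext i
      by_cases hi : i = 0 <;> simp only [hi, if_true, if_false] <;>
        rw [hFapp] <;> first | exact hξc | exact hηc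
    rw [h5, hfe, hbranch]
  -- the evaluation algebra homomorphism
  set EV : Poly2 ℂ →ₐ[ℂ] PowerSeries ℂ :=
    aeval (fun i : Fin 2 => if i = 0 then ξ₀ else η₀) with hEVdef
  have hEV0 : EV (X 0) = ξ₀ := by simp [hEVdef]
  have hEV1 : EV (X 1) = η₀ := by simp [hEVdef]
  -- nondegeneracy : EV (pderiv 1 Γ) ≠ 0
  have hGy : EV (pderiv 1 Γ) ≠ 0 := by
    intro hzero
    set φr : Polynomial (Polynomial ℂ) →+* PowerSeries ℂ :=
      (EV : Poly2 ℂ →+* PowerSeries ℂ).comp (e2inv : Polynomial (Polynomial ℂ) →ₐ[ℂ] Poly2 ℂ)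
        with hφrdef
    have hφr : ∀ P, φr P = EV (e2inv P) := fun _ => rfl
    have h1 : ∀ s : Polynomial ℂ, φr (Polynomial.C s) = 0 → s = 0 := by
      intro s hs
      by_contra hne
      apply aeval_ps_ne_zero ξ₀ hx0 hξ₀ne hne
      rw [← hs, hφr]
      rw [show e2inv (Polynomial.C s) = Polynomial.aeval (X 0 : Poly2 ℂ) s from
        Polynomial.aevalTower_C _ _ _]
      rw [← hEV0]
      exact Polynomial.aeval_algHom_apply EV (X 0) s
    have hG0 : φr (e2 Γ) = 0 := by
      rw [hφr, e2inv_e2, hbr]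
    have hkey := keyV φr h1 (e2 Γ) (squarefree_eqv hsf) hG0
    apply hkey
    rw [← e2_pderiv, hφr, e2inv_e2]
    exact hzero
  -- the derivation and the chain rule
  set D : Derivation ℂ (PowerSeries ℂ) (PowerSeries ℂ) := PowerSeries.derivative ℂ with hDdef
  have hchain : EV (pderiv 0 Γ) * D ξ₀ + EV (pderiv 1 Γ) * D η₀ = 0 := by
    have hcr := chainRule D (fun i : Fin 2 => if i = 0 then ξ₀ else η₀) Γ
    rw [show (aeval (fun i : Fin 2 => if i = 0 then ξ₀ else η₀)) Γ = EV Γ from rfl, hbr,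
      map_zero] at hcr
    simpa using hcr.symm
  have h3a : EV a * EV (pderiv 0 Γ) + EV b * EV (pderiv 1 Γ) = 0 := by
    obtain ⟨g1, hg1⟩ := hA31
    have := congrArg EV hg1
    rw [map_add, map_mul, map_mul, map_mul, hbr, zero_mul] at this
    exact this
  have h3b : EV b * EV (pderiv 0 Γ) + EV c * EV (pderiv 1 Γ) = 0 := by
    obtain ⟨g2, hg2⟩ := hA32
    have := congrArg EV hg2
    rw [map_add, map_mul, map_mul, map_mul, hbr, zero_mul] at this
    exact this
  have key1 : EV a * D η₀ = EV b * D ξ₀ := by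
    have h4 : (EV a * D η₀ - EV b * D ξ₀) * EV (pderiv 1 Γ) = 0 := by
      linear_combination (EV a) * hchain - (D ξ₀) * h3a
    rcases mul_eq_zero.mp h4 with h5 | h5
    · exact sub_eq_zero.mp h5
    · exact absurd h5 hGy
  have key2 : EV b * D η₀ = EV c * D ξ₀ := by
    have h4 : (EV b * D η₀ - EV c * D ξ₀) * EV (pderiv 1 Γ) = 0 := by
      linear_combination (EV b) * hchain - (D ξ₀) * h3b
    rcases mul_eq_zero.mp h4 with h5 | h5
    · exact sub_eq_zero.mp h5
    · exact absurd h5 hGy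
  -- coefficient computations
  have hDξ : PowerSeries.constantCoeff (D ξ₀) = 0 := by
    rw [← PowerSeries.coeff_zero_eq_constantCoeff, hDdef]
    rw [PowerSeries.coeff_derivative]
    norm_num [hx1]
  have hDη : PowerSeries.constantCoeff (D η₀) = PowerSeries.coeff 1 η₀ := by
    rw [← PowerSeries.coeff_zero_eq_constantCoeff, hDdef]
    rw [PowerSeries.coeff_derivative]
    norm_num
  have hEVca : PowerSeries.constantCoeff (EV a) = constantCoeff a :=
    EV_coeff_zero ξ₀ η₀ hx0 hy0 a
  have hEVcb : PowerSeries.constantCoeff (EV b) = constantCoeff b :=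
    EV_coeff_zero ξ₀ η₀ hx0 hy0 b
  have goal1 : constantCoeff a = 0 := by
    have e0 := congrArg (PowerSeries.constantCoeff) key1
    rw [map_mul (PowerSeries.constantCoeff) (EV a) (D η₀),
      map_mul (PowerSeries.constantCoeff) (EV b) (D ξ₀), hDξ, hDη, mul_zero, hEVca] at e0
    exact (mul_eq_zero.mp e0).resolve_right hy1
  have goal3 : constantCoeff b = 0 := by
    have e0 := congrArg (PowerSeries.constantCoeff) key2
    rw [map_mul (PowerSeries.constantCoeff) (EV b) (D η₀),
      map_mul (PowerSeries.constantCoeff) (EV c) (D ξ₀), hDξ, hDη, mul_zero, hEVcb] at e0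
    exact (mul_eq_zero.mp e0).resolve_right hy1
  have hc1 : ∀ f g : PowerSeries ℂ, PowerSeries.coeff 1 (f * g) =
      PowerSeries.constantCoeff f * PowerSeries.coeff 1 g +
      PowerSeries.coeff 1 f * PowerSeries.constantCoeff g := by
    intro f g
    rw [PowerSeries.coeff_mul, Finset.Nat.sum_antidiagonal_eq_sum_range_succ_mk]
    simp [Finset.sum_range_succ, PowerSeries.coeff_zero_eq_constantCoeff]
  have goal2 : MvPolynomial.coeff (Finsupp.single 1 1) a = 0 := by
    have e1 := congrArg (PowerSeries.coeff 1) key1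
    rw [hc1 (EV a) (D η₀), hc1 (EV b) (D ξ₀), hEVca, hEVcb, goal1, goal3, hDξ, hDη,
      EV_coeff_one ξ₀ η₀ hx0 hx1 hy0 a, zero_mul, zero_mul, zero_add, zero_add, mul_zero] at e1
    rcases mul_eq_zero.mp e1 with h5 | h5
    · exact (mul_eq_zero.mp h5).resolve_right hy1
    · exact absurd h5 hy1
  refine ⟨goal1, goal2, goal3, ?_⟩
  -- degree bounds
  have hwpos : (0:ℝ) < w := by linarith
  have hy_a : ∀ m ∈ a.support, m 1 = 0 := by
    intro m hm
    have hw' := hwa m hm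
    rw [one_mul, mul_one] at hw'
    by_contra hm1
    have h1' : (1:ℕ) ≤ m 1 := Nat.one_le_iff_ne_zero.mpr hm1
    have hm1' : m 1 = 1 := by
      by_contra h2
      have h3 : (2:ℕ) ≤ m 1 := by omega
      have h3' : (2:ℝ) ≤ (m 1 : ℝ) := by exact_mod_cast h3
      have h4' : (0:ℝ) ≤ (m 0 : ℝ) := Nat.cast_nonneg _
      nlinarith
    have hm0 : m 0 = 0 := by
      by_contra h2
      have h3 : (1:ℕ) ≤ m 0 := Nat.one_le_iff_ne_zero.mpr h2
      have h3' : (1:ℝ) ≤ (m 0 : ℝ) := by exact_mod_cast h3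
      rw [hm1'] at hw'
      push_cast at hw'
      nlinarith
    have hmeq : m = Finsupp.single 1 1 := by
      ext i
      fin_cases i <;> simp [hm0, hm1']
    exact (MvPolynomial.mem_support_iff.mp hm) (hmeq ▸ goal2)
  have hdega : degreeOf 1 a = 0 :=
    Nat.le_zero.mp (degreeOf_le_iff.mpr fun m hm => (hy_a m hm).le)
  have hdegb : degreeOf 1 b ≤ 1 := by
    apply degreeOf_le_iff.mpr
    intro m hm
    have hw' := hwb m hm
    rw [one_mul] at hw'
    by_contra h2
    have h3 : (2:ℕ) ≤ m 1 := by omega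
    have h3' : (2:ℝ) ≤ (m 1 : ℝ) := by exact_mod_cast h3
    have h4' : (0:ℝ) ≤ (m 0 : ℝ) := Nat.cast_nonneg _
    nlinarith
  have hdegc : degreeOf 1 c ≤ 2 := by
    apply degreeOf_le_iff.mpr
    intro m hm
    have hw' := hwc m hm
    rw [one_mul] at hw'
    by_contra h2
    have h3 : (3:ℕ) ≤ m 1 := by omega
    have h3' : (3:ℝ) ≤ (m 1 : ℝ) := by exact_mod_cast h3
    have h4' : (0:ℝ) ≤ (m 0 : ℝ) := Nat.cast_nonneg _
    nlinarith
  apply degreeOf_le_iff.mpr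
  intro m hm
  have hm' := MvPolynomial.mem_support_iff.mp hm
  have hsplit : MvPolynomial.coeff m (a*c) ≠ 0 ∨ MvPolynomial.coeff m (b^2) ≠ 0 := by
    by_contra hcon
    push_neg at hcon
    apply hm'
    rw [MvPolynomial.coeff_sub, hcon.1, hcon.2, sub_zero]
  rcases hsplit with h5 | h5
  · have hmem : m ∈ (a*c).support := MvPolynomial.mem_support_iff.mpr h5
    calc m 1 ≤ degreeOf 1 (a*c) := degreeOf_le_iff.mp le_rfl m hmem
    _ ≤ degreeOf 1 a + degreeOf 1 c := degreeOf_mul_le _ _ _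
    _ ≤ 2 := by rw [hdega]; omega
  · have hmem : m ∈ (b*b).support := by
      rw [← sq]
      exact MvPolynomial.mem_support_iff.mpr h5
    calc m 1 ≤ degreeOf 1 (b*b) := degreeOf_le_iff.mp le_rfl m hmem
    _ ≤ degreeOf 1 b + degreeOf 1 b := degreeOf_mul_le _ _ _
    _ ≤ 2 := by omega
end
end

section
/- Let w > 1 be real and let (g,Γ) be a solution of the (1,w)-AlgDOP problem over ℂ. Suppose that deg_y Γ = 2 and that no nonconstant polynomial in x alone divides Γ. Then Γ is monic in y up to a constant: the coefficient of y² in Γ (an element of ℂ[x]) is a nonzero constant. -/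
open MvPolynomial

noncomputable section

namespace G41
open Polynomial

abbrev RR := Polynomial ℂ

def Φ : Poly2 ℂ →ₐ[ℂ] Polynomial RR :=
  MvPolynomial.aeval (fun i : Fin 2 => if i = 0 then Polynomial.C Polynomial.X else Polynomial.X)

lemma fin2_eq (m : Fin 2 →₀ ℕ) : Finsupp.single 0 (m 0) + Finsupp.single 1 (m 1) = m := by
  ext i; fin_cases i <;> simp [Finsupp.single_apply]

lemma single_single_eq_iff {m : Fin 2 →₀ ℕ} {j i : ℕ} :
    (m = Finsupp.single 0 j + Finsupp.single 1 i) ↔ (m 0 = j ∧ m 1 = i) := by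
  constructor
  · intro h; subst h; simp [Finsupp.single_apply]
  · rintro ⟨h0, h1⟩; rw [← fin2_eq m, h0, h1]

lemma monomial_eq' (m : Fin 2 →₀ ℕ) (c : ℂ) :
    monomial m c = MvPolynomial.C c * X 0 ^ (m 0) * X 1 ^ (m 1) := by
  rw [MvPolynomial.X_pow_eq_monomial, MvPolynomial.X_pow_eq_monomial, MvPolynomial.C_apply,
    MvPolynomial.monomial_mul, MvPolynomial.monomial_mul]
  rw [← fin2_eq m]
  simp

lemma Φ_monomial (m : Fin 2 →₀ ℕ) (c : ℂ) :
    Φ (monomial m c) = Polynomial.C (Polynomial.C c * Polynomial.X ^ (m 0)) * Polynomial.X ^ (m 1) := by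
  rw [monomial_eq']
  simp only [Φ, map_mul, map_pow, MvPolynomial.aeval_X, MvPolynomial.algHom_C]
  norm_num

lemma coeff_Φ (P : Poly2 ℂ) (i j : ℕ) :
    ((Φ P).coeff i).coeff j = P.coeff (Finsupp.single 0 j + Finsupp.single 1 i) := by
  induction P using MvPolynomial.induction_on' with
  | monomial m c =>
      rw [Φ_monomial, MvPolynomial.coeff_monomial]
      simp only [Polynomial.coeff_C_mul, Polynomial.coeff_X_pow]
      by_cases h1 : i = m 1 <;> by_cases h0 : j = m 0 <;>
        simp [h1, h0, single_single_eq_iff, Polynomial.coeff_C_mul, Polynomial.coeff_X_pow,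
          eq_comm (a := m 0), eq_comm (a := m 1)]
  | add p q hp hq => simp [map_add, Polynomial.coeff_add, MvPolynomial.coeff_add, hp, hq]

lemma Φ_injective : Function.Injective Φ := by
  intro p q h
  apply MvPolynomial.ext
  intro m
  have := coeff_Φ p (m 1) (m 0)
  have h2 := coeff_Φ q (m 1) (m 0)
  rw [fin2_eq] at this h2
  rw [← this, ← h2, h]


/-- coefficientwise derivative -/
def Dx (p : Polynomial RR) : Polynomial RR :=
  ⟨.ofCoeff (p.toFinsupp.coeff.mapRange Polynomial.derivative (map_zero _))⟩

lemma coeff_Dx (p : Polynomial RR) (n : ℕ) :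
    (Dx p).coeff n = Polynomial.derivative (p.coeff n) := rfl

lemma Dx_add (p q : Polynomial RR) : Dx (p + q) = Dx p + Dx q := by
  apply Polynomial.ext; intro n; simp [coeff_Dx]

lemma Dx_C_mul_X_pow (p : RR) (i : ℕ) :
    Dx (Polynomial.C p * Polynomial.X ^ i) = Polynomial.C (Polynomial.derivative p) * Polynomial.X ^ i := by
  apply Polynomial.ext; intro n
  simp only [coeff_Dx, Polynomial.coeff_C_mul, Polynomial.coeff_X_pow]
  by_cases h : n = i <;> simp [h]

lemma Φ_pderiv1 (P : Poly2 ℂ) : Φ (pderiv 1 P) = Polynomial.derivative (Φ P) := by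
  induction P using MvPolynomial.induction_on' with
  | add p q hp hq => simp [map_add, hp, hq]
  | monomial m c =>
      rw [MvPolynomial.pderiv_monomial, Φ_monomial, Φ_monomial, Polynomial.derivative_C_mul_X_pow]
      have h0 : ((m - Finsupp.single 1 1 : Fin 2 →₀ ℕ)) 0 = m 0 := by
        rw [Finsupp.tsub_apply]; simp [Finsupp.single_apply]
      have h1 : ((m - Finsupp.single 1 1 : Fin 2 →₀ ℕ)) 1 = m 1 - 1 := by
        rw [Finsupp.tsub_apply]; simp [Finsupp.single_apply]
      rcases Nat.eq_zero_or_pos (m 1) with h | h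
      · rw [h0, h1, h]; simp
      · rw [h0, h1]
        have key : Polynomial.C (c * ((m 1 : ℕ) : ℂ)) * Polynomial.X ^ (m 0)
            = Polynomial.C c * Polynomial.X ^ (m 0) * (((m 1 : ℕ)) : RR) := by
          rw [Polynomial.C_mul, map_natCast]; ring
        rw [key]
lemma Φ_pderiv0 (P : Poly2 ℂ) : Φ (pderiv 0 P) = Dx (Φ P) := by
  induction P using MvPolynomial.induction_on' with
  | add p q hp hq => simp [map_add, hp, hq, Dx_add]
  | monomial m c =>
      rw [MvPolynomial.pderiv_monomial, Φ_monomial, Φ_monomial, Dx_C_mul_X_pow,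
        Polynomial.derivative_C_mul_X_pow]
      have h0 : ((m - Finsupp.single 0 1 : Fin 2 →₀ ℕ)) 0 = m 0 - 1 := by
        rw [Finsupp.tsub_apply]; simp [Finsupp.single_apply]
      have h1 : ((m - Finsupp.single 0 1 : Fin 2 →₀ ℕ)) 1 = m 1 := by
        rw [Finsupp.tsub_apply]; simp [Finsupp.single_apply]
      rw [h0, h1]

lemma Φ_toX (q : RR) : Φ (toX q) = Polynomial.C q := by
  unfold toX
  rw [← Polynomial.aeval_algHom_apply]
  have : Φ (X 0) = Polynomial.C Polynomial.X := by simp [Φ]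
  rw [this]
  rw [show (Polynomial.C Polynomial.X : Polynomial RR) = algebraMap RR (Polynomial RR) Polynomial.X from rfl]
  rw [Polynomial.aeval_algebraMap_apply]
  simp

lemma Φ_surjective : Function.Surjective Φ := by
  intro W
  induction W using Polynomial.induction_on' with
  | add p q hp hq =>
      obtain ⟨P, hP⟩ := hp; obtain ⟨Q, hQ⟩ := hq
      exact ⟨P + Q, by simp [map_add, hP, hQ]⟩
  | monomial n p =>
      induction p using Polynomial.induction_on' with
      | add p q hp hq =>
          obtain ⟨P, hP⟩ := hp; obtain ⟨Q, hQ⟩ := hq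
          exact ⟨P + Q, by rw [map_add, hP, hQ, ← map_add]⟩
      | monomial j c =>
          refine ⟨MvPolynomial.monomial (Finsupp.single 0 j + Finsupp.single 1 n) c, ?_⟩
          rw [Φ_monomial]
          have e0 : ((Finsupp.single (0:Fin 2) j + Finsupp.single 1 n : Fin 2 →₀ ℕ)) 0 = j := by
            simp [Finsupp.single_apply]
          have e1 : ((Finsupp.single (0:Fin 2) j + Finsupp.single 1 n : Fin 2 →₀ ℕ)) 1 = n := by
            simp [Finsupp.single_apply]
          rw [e0, e1]
          simp only [Polynomial.C_mul_X_pow_eq_monomial]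

lemma dvd_toX_of_dvd_coeffs (q : RR) (P : Poly2 ℂ) (h : ∀ i, q ∣ (Φ P).coeff i) :
    toX q ∣ P := by
  have : Polynomial.C q ∣ Φ P := (Polynomial.C_dvd_iff_dvd_coeff q (Φ P)).mpr h
  obtain ⟨W, hW⟩ := this
  obtain ⟨W', hW'⟩ := Φ_surjective W
  refine ⟨W', Φ_injective ?_⟩
  rw [map_mul, Φ_toX, hW', hW]


lemma Dx_C (p : RR) : Dx (Polynomial.C p) = Polynomial.C (Polynomial.derivative p) := by
  have := Dx_C_mul_X_pow p 0; simpa using this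
lemma Dx_C_mul_X (p : RR) : Dx (Polynomial.C p * Polynomial.X) = Polynomial.C (Polynomial.derivative p) * Polynomial.X := by
  have := Dx_C_mul_X_pow p 1; simpa using this

lemma natDegree_Dx_le (p : Polynomial RR) : (Dx p).natDegree ≤ p.natDegree := by
  by_cases hp : Dx p = 0
  · simp [hp]
  refine Polynomial.natDegree_le_iff_coeff_eq_zero.mpr ?_
  intro N hN
  rw [coeff_Dx, Polynomial.coeff_eq_zero_of_natDegree_lt hN, map_zero]

lemma rep1 (p : Polynomial RR) (h : p.natDegree ≤ 1) :
    p = Polynomial.C (p.coeff 0) + Polynomial.C (p.coeff 1) * Polynomial.X := by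
  apply Polynomial.ext; intro n
  match n with
  | 0 => simp
  | 1 => simp
  | (n+2) =>
    have h2 : p.coeff (n+2) = 0 := Polynomial.coeff_eq_zero_of_natDegree_lt (by omega)
    simp [h2, Polynomial.coeff_C]

lemma rep2 (p : Polynomial RR) (h : p.natDegree ≤ 2) :
    p = Polynomial.C (p.coeff 0) + Polynomial.C (p.coeff 1) * Polynomial.X
      + Polynomial.C (p.coeff 2) * Polynomial.X ^ 2 := by
  apply Polynomial.ext; intro n
  match n with
  | 0 => simp
  | 1 => simp [Polynomial.coeff_X_pow]
  | 2 => simp [Polynomial.coeff_X_pow, Polynomial.coeff_C]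
  | (n+3) =>
    have h2 : p.coeff (n+3) = 0 := Polynomial.coeff_eq_zero_of_natDegree_lt (by omega)
    simp [h2, Polynomial.coeff_C, Polynomial.coeff_X_pow]

lemma cubic_eq_iff {p0 p1 p2 p3 q0 q1 q2 q3 : RR} :
    (Polynomial.C p0 + Polynomial.C p1 * Polynomial.X + Polynomial.C p2 * Polynomial.X ^ 2
      + Polynomial.C p3 * Polynomial.X ^ 3
      = Polynomial.C q0 + Polynomial.C q1 * Polynomial.X + Polynomial.C q2 * Polynomial.X ^ 2
      + Polynomial.C q3 * Polynomial.X ^ 3)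
    ↔ (p0 = q0 ∧ p1 = q1 ∧ p2 = q2 ∧ p3 = q3) := by
  constructor
  · intro hE
    refine ⟨?_, ?_, ?_, ?_⟩
    · have := congrArg (fun P => Polynomial.coeff P 0) hE
      simpa [Polynomial.coeff_X_pow, Polynomial.coeff_C] using this
    · have := congrArg (fun P => Polynomial.coeff P 1) hE
      simpa [Polynomial.coeff_X_pow, Polynomial.coeff_C] using this
    · have := congrArg (fun P => Polynomial.coeff P 2) hE
      simpa [Polynomial.coeff_X_pow, Polynomial.coeff_C] using this
    · have := congrArg (fun P => Polynomial.coeff P 3) hE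
      simpa [Polynomial.coeff_X_pow, Polynomial.coeff_C] using this
  · rintro ⟨rfl, rfl, rfl, rfl⟩; rfl

lemma deriv_quad (p q r : RR) :
    Polynomial.derivative (Polynomial.C p + Polynomial.C q * Polynomial.X
      + Polynomial.C r * Polynomial.X ^ 2)
    = Polynomial.C q + Polynomial.C 2 * Polynomial.C r * Polynomial.X := by
  simp [Polynomial.derivative_C_mul_X_pow]
  simp only [map_ofNat]
  ring

lemma dx_quad (p q r : RR) :
    Dx (Polynomial.C p + Polynomial.C q * Polynomial.X + Polynomial.C r * Polynomial.X ^ 2)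
    = Polynomial.C (Polynomial.derivative p) + Polynomial.C (Polynomial.derivative q) * Polynomial.X
      + Polynomial.C (Polynomial.derivative r) * Polynomial.X ^ 2 := by
  rw [Dx_add, Dx_add, Dx_C, Dx_C_mul_X, Dx_C_mul_X_pow]


lemma natdeg_eq_C {p : RR} (h : p.natDegree = 0) : ∃ a : ℂ, p = Polynomial.C a := by
  obtain ⟨a, ha⟩ := Polynomial.natDegree_eq_zero.mp h
  exact ⟨a, ha.symm⟩

lemma cancel_t {t p q : RR} (ht : t ≠ 0) (h : t * p = t * q) : p = q := mul_left_cancel₀ ht h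

lemma partB (A B C a0 b0 b1 c0 c1 c2 u v0 h : RR)
    (hdA : 1 ≤ A.natDegree)
    (ha0 : a0 ≠ 0) (hh : h ≠ 0)
    (hdeg_a0 : a0.natDegree ≤ 2) (hdeg_b1 : b1.natDegree ≤ 1) (hdeg_c2 : c2.natDegree = 0)
    (F2 : a0 * Polynomial.derivative A + 2 * b1 * A = u * A)
    (F1 : a0 * Polynomial.derivative B + 2 * b0 * A + b1 * B = u * B)
    (F0 : a0 * Polynomial.derivative C + b0 * B = u * C)
    (D2 : a0 * c2 - b1 ^ 2 = h * A)
    (D1 : a0 * c1 - 2 * b0 * b1 = h * B)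
    (D0 : a0 * c0 - b0 ^ 2 = h * C)
    (Y0 : h * B = a0 * v0 - b0 * u)
    (hnf : ∀ r : ℂ, ¬(A.eval r = 0 ∧ B.eval r = 0 ∧ C.eval r = 0)) : False := by
  have hA : A ≠ 0 := by
    intro h0; rw [h0] at hdA; simp at hdA
  have hdegHA : h.natDegree + A.natDegree ≤ 2 := by
    have e1 : (h * A).natDegree = h.natDegree + A.natDegree := Polynomial.natDegree_mul hh hA
    have e2 : (a0 * c2 - b1 ^ 2).natDegree ≤ 2 := by
      refine le_trans (Polynomial.natDegree_sub_le _ _) ?_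
      have d1 : (a0 * c2).natDegree ≤ 2 := le_trans Polynomial.natDegree_mul_le (by omega)
      have d2 : (b1 ^ 2).natDegree ≤ 2 := le_trans (Polynomial.natDegree_pow_le) (by omega)
      omega
    rw [D2] at e2; omega
  have hdegA2 : A.natDegree ≤ 2 := by omega
  obtain ⟨r, hr⟩ : ∃ r : ℂ, A.eval r = 0 := by
    have : 0 < A.degree := Polynomial.natDegree_pos_iff_degree_pos.mp (by omega)
    exact Complex.exists_root this
  set t : RR := Polynomial.X - Polynomial.C r with ht_def
  have htne : t ≠ 0 := Polynomial.X_sub_C_ne_zero r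
  have htdeg : t.natDegree = 1 := Polynomial.natDegree_X_sub_C r
  have hdvd : ∀ p : RR, p.eval r = 0 → t ∣ p := fun p hp => Polynomial.dvd_iff_isRoot.mpr hp
  have evt : t.eval r = 0 := by simp [ht_def]
  have ht2ne : t ^ 2 ≠ 0 := pow_ne_zero 2 htne
  have dt : Polynomial.derivative t = 1 := by simp [ht_def]
  obtain ⟨m, hm⟩ : t ∣ A := hdvd A hr
  have hmne : m ≠ 0 := by rintro rfl; simp [hm] at hA
  by_cases hm2 : t ∣ m
  · -- BRANCH P : t^2 ∣ A, so A = C ℓ t², h = C h0 nonzero constant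
    obtain ⟨s, hs⟩ := hm2
    have hsne : s ≠ 0 := by rintro rfl; simp [hs] at hmne
    have hA2 : A = t ^ 2 * s := by rw [hm, hs]; ring
    have hdegA : A.natDegree = 2 + s.natDegree := by
      rw [hA2, Polynomial.natDegree_mul ht2ne hsne, Polynomial.natDegree_pow, htdeg]
    have hdegs : s.natDegree = 0 := by omega
    obtain ⟨l, hl⟩ := natdeg_eq_C hdegs
    have hlne : l ≠ 0 := by rintro rfl; rw [hl] at hsne; simp at hsne
    rw [hl] at hA2
    have hdh0 : h.natDegree = 0 := by omega
    obtain ⟨h0, hh0⟩ := natdeg_eq_C hdh0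
    have hh0ne : h0 ≠ 0 := by rintro rfl; rw [hh0] at hh; simp at hh
    have hA' : Polynomial.derivative A = 2 * t * Polynomial.C l := by
      rw [hA2, Polynomial.derivative_mul, Polynomial.derivative_pow, Polynomial.derivative_C, dt]
      push_cast
      simp only [map_ofNat]
      ring
    have key2 : 2 * a0 = (u - 2 * b1) * t := by
      refine cancel_t (mul_ne_zero htne (show Polynomial.C l ≠ 0 by simpa using hlne)) ?_
      linear_combination F2 - a0 * hA' - (2 * b1 - u) * hA2
    have ha0r : a0.eval r = 0 := by
      have e := congrArg (Polynomial.eval r) key2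
      simp [evt] at e
      exact e
    have hb1r : b1.eval r = 0 := by
      have e := congrArg (Polynomial.eval r) D2
      rw [hA2] at e
      simp [evt, ha0r] at e
      simpa [pow_eq_zero_iff] using e
    by_cases hhr : h.eval r = 0
    · rw [hh0] at hhr; simp at hhr; exact hh0ne hhr
    · have hBr : B.eval r = 0 := by
        have e := congrArg (Polynomial.eval r) D1
        simp [ha0r, hb1r] at e
        tauto
      by_cases hb0r : b0.eval r = 0
      · have hCr : C.eval r = 0 := by
          have e := congrArg (Polynomial.eval r) D0
          simp [ha0r, hb0r] at e
          tauto
        exact hnf r ⟨hr, hBr, hCr⟩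
      · have hur : u.eval r = 0 := by
          have e := congrArg (Polynomial.eval r) Y0
          simp [ha0r, hBr, hhr] at e
          tauto
        obtain ⟨at', hat⟩ : t ∣ a0 := hdvd a0 ha0r
        have key2' : 2 * at' = u - 2 * b1 := by
          refine cancel_t htne ?_
          linear_combination key2 - 2 * hat
        have hatr : at'.eval r = 0 := by
          have e := congrArg (Polynomial.eval r) key2'
          simp [hur, hb1r] at e
          exact e
        obtain ⟨ah, hah⟩ : t ∣ at' := hdvd at' hatr
        have ha02 : a0 = t ^ 2 * ah := by rw [hat, hah]; ring
        have hahne : ah ≠ 0 := by rintro rfl; simp [ha02] at ha0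
        have hdegah : ah.natDegree = 0 := by
          have e : a0.natDegree = 2 + ah.natDegree := by
            rw [ha02, Polynomial.natDegree_mul ht2ne hahne, Polynomial.natDegree_pow, htdeg]
          omega
        obtain ⟨al, hal⟩ := natdeg_eq_C hdegah
        have halne : al ≠ 0 := by rintro rfl; rw [hal] at hahne; simp at hahne
        have ha02c : a0 = t ^ 2 * Polynomial.C al := by rw [ha02, hal]
        obtain ⟨q, hq⟩ : t ∣ b1 := hdvd b1 hb1r
        obtain ⟨bv, hbv⟩ : ∃ bv : ℂ, q = Polynomial.C bv := by
          by_cases hqz : q = 0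
          · exact ⟨0, by simp [hqz]⟩
          · apply natdeg_eq_C
            have e : b1.natDegree = 1 + q.natDegree := by
              rw [hq, Polynomial.natDegree_mul htne hqz, htdeg]
            omega
        have hb1' : b1 = t * Polynomial.C bv := by rw [hq, hbv]
        have hu : u = 2 * t * Polynomial.C al + 2 * t * Polynomial.C bv := by
          linear_combination -key2' + 2 * hah + 2 * hal * t + 2 * hb1'
        obtain ⟨Bt, hBt⟩ : t ∣ B := hdvd B hBr
        have E1 : t * Polynomial.C al * c1 - 2 * b0 * Polynomial.C bv = Polynomial.C h0 * Bt := by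
          refine cancel_t htne ?_
          linear_combination D1 - c1 * ha02c + 2 * b0 * hb1' + B * hh0 + Polynomial.C h0 * hBt
        have E2 : t * Polynomial.C al * Polynomial.derivative C + b0 * Bt
            = (2 * Polynomial.C al + 2 * Polynomial.C bv) * C := by
          refine cancel_t htne ?_
          linear_combination F0 - Polynomial.derivative C * ha02c - b0 * hBt + C * hu
        have i1 : -(2 * b0.eval r * bv) = h0 * Bt.eval r := by
          have e := congrArg (Polynomial.eval r) E1
          simpa [evt] using e
        have i2 : b0.eval r * Bt.eval r = (2 * al + 2 * bv) * C.eval r := by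
          have e := congrArg (Polynomial.eval r) E2
          simpa [evt] using e
        have i3 : -(b0.eval r ^ 2) = h0 * C.eval r := by
          have e := congrArg (Polynomial.eval r) D0
          rw [ha02c, hh0] at e
          simpa [evt] using e
        have hfin : 2 * al * b0.eval r ^ 2 = 0 := by
          linear_combination (b0.eval r) * i1 + h0 * i2 - (2 * al + 2 * bv) * i3
        have : al = 0 := by
          have h2 : b0.eval r ^ 2 ≠ 0 := pow_ne_zero 2 hb0r
          rcases mul_eq_zero.mp hfin with h' | h'
          · rcases mul_eq_zero.mp h' with h'' | h''
            · norm_num at h''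
            · exact h''
          · exact absurd h' h2
        exact halne this
  · -- BRANCH N : simple root of A
    have hmr : m.eval r ≠ 0 := fun h' => hm2 (hdvd m h')
    have hA'm : (Polynomial.derivative A).eval r = m.eval r := by
      rw [hm, Polynomial.derivative_mul, dt]
      simp [evt]
    have ha0r : a0.eval r = 0 := by
      have e := congrArg (Polynomial.eval r) F2
      simp [hr, hA'm] at e
      tauto
    have hb1r : b1.eval r = 0 := by
      have e := congrArg (Polynomial.eval r) D2
      simp [hr, ha0r] at e
      simpa [pow_eq_zero_iff] using e
    obtain ⟨at', hat⟩ : t ∣ a0 := hdvd a0 ha0r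
    obtain ⟨q2, hq2⟩ : t ∣ b1 := hdvd b1 hb1r
    by_cases hhr : h.eval r = 0
    · -- Case 3 : t ∣ h , so deg A = 1, h = η t
      obtain ⟨g, hg⟩ : t ∣ h := hdvd h hhr
      have hgne : g ≠ 0 := by rintro rfl; simp [hg] at hh
      have hdegh : h.natDegree = 1 + g.natDegree := by
        rw [hg, Polynomial.natDegree_mul htne hgne, htdeg]
      have hdegAm : A.natDegree = 1 + m.natDegree := by
        rw [hm, Polynomial.natDegree_mul htne hmne, htdeg]
      have hdegm : m.natDegree = 0 := by omega
      have hdegg : g.natDegree = 0 := by omega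
      obtain ⟨l, hl⟩ := natdeg_eq_C hdegm
      have hlne : l ≠ 0 := by rw [hl] at hmr; simpa using hmr
      obtain ⟨et, het⟩ := natdeg_eq_C hdegg
      have hetne : et ≠ 0 := by rintro rfl; rw [het] at hgne; simp at hgne
      have hgc : h = t * Polynomial.C et := by rw [hg, het]
      have hb0r : b0.eval r = 0 := by
        have e := congrArg (Polynomial.eval r) D0
        simp [ha0r, hhr] at e
        simpa [pow_eq_zero_iff] using e
      obtain ⟨bt, hbt⟩ : t ∣ b0 := hdvd b0 hb0r
      by_cases hatr : at'.eval r = 0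
      · -- t² ∣ a0
        obtain ⟨ah, hah⟩ : t ∣ at' := hdvd at' hatr
        have E1 : t * ah * c1 - 2 * t * bt * q2 = Polynomial.C et * B := by
          refine cancel_t htne ?_
          linear_combination D1 - c1 * hat - t * c1 * hah + 2 * b1 * hbt + 2 * t * bt * hq2 + B * hgc
        have hBr : B.eval r = 0 := by
          have e := congrArg (Polynomial.eval r) E1
          simp [evt] at e
          tauto
        have E0 : at' * c0 - t * bt ^ 2 = Polynomial.C et * C := by
          refine cancel_t htne ?_
          linear_combination D0 - c0 * hat + (b0 + t * bt) * hbt + C * hgc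
        have hCr : C.eval r = 0 := by
          have e := congrArg (Polynomial.eval r) E0
          simp [evt, hatr] at e
          tauto
        exact hnf r ⟨hr, hBr, hCr⟩
      · -- at'(r) ≠ 0
        have hA1 : A = t * Polynomial.C l := by rw [hm, hl]
        have hA'1 : Polynomial.derivative A = Polynomial.C l := by
          rw [hA1, Polynomial.derivative_mul, dt, Polynomial.derivative_C]
          ring
        have hu : at' + 2 * t * q2 = u := by
          refine cancel_t (mul_ne_zero htne (show Polynomial.C l ≠ 0 by simpa using hlne)) ?_
          linear_combination F2 - Polynomial.derivative A * hat - t * at' * hA'1 - 2 * A * hq2 - (2 * t * q2 - u) * hA1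
        have hur : u.eval r = at'.eval r := by
          have e := congrArg (Polynomial.eval r) hu
          simpa [evt] using e.symm
        have hBr : B.eval r = 0 := by
          have e := congrArg (Polynomial.eval r) F1
          simp [ha0r, hb1r, hr, hur] at e
          tauto
        have hCr : C.eval r = 0 := by
          have e := congrArg (Polynomial.eval r) F0
          simp [ha0r, hBr, hur] at e
          tauto
        exact hnf r ⟨hr, hBr, hCr⟩
    · -- Case 4 with simple root
      have hBr : B.eval r = 0 := by
        have e := congrArg (Polynomial.eval r) D1
        simp [ha0r, hb1r] at e
        tauto
      by_cases hb0r : b0.eval r = 0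
      · have hCr : C.eval r = 0 := by
          have e := congrArg (Polynomial.eval r) D0
          simp [ha0r, hb0r] at e
          tauto
        exact hnf r ⟨hr, hBr, hCr⟩
      · have hur : u.eval r = 0 := by
          have e := congrArg (Polynomial.eval r) Y0
          simp [ha0r, hBr, hhr] at e
          exact e.resolve_left hb0r
        have key : at' * Polynomial.derivative A + 2 * b1 * m = u * m := by
          refine cancel_t htne ?_
          linear_combination F2 - Polynomial.derivative A * hat - (2 * b1 - u) * hm
        have hatr : at'.eval r = 0 := by
          have e := congrArg (Polynomial.eval r) key
          simp [hb1r, hur, hA'm] at e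
          exact e.resolve_right hmr
        obtain ⟨ah, hah⟩ : t ∣ at' := hdvd at' hatr
        have E2 : t * ah * c2 - t * q2 ^ 2 = h * m := by
          refine cancel_t htne ?_
          linear_combination D2 - c2 * hat - t * c2 * hah + (b1 + t * q2) * hq2 + h * hm
        have e0 : h.eval r * m.eval r = 0 := by
          have e := congrArg (Polynomial.eval r) E2
          simpa [evt] using e.symm
        rcases mul_eq_zero.mp e0 with h' | h'
        · exact absurd h' hhr
        · exact absurd h' hmr


end G41

open G41 Polynomial in
/-- Lemma 4.1: let `(g,Γ)` be a solution of the `(1,w)`-AlgDOP problem over `ℂ`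
with `w > 1`, such that `deg_y Γ = 2` and no nonconstant polynomial in `x` alone
divides `Γ`. Then the coefficient of `y²` in `Γ` (an element of `ℂ[x]`) is a
nonzero constant `k`: the coefficient of `x^j y²` in `Γ` is `k` for `j = 0` and
`0` for `j > 0`. -/
theorem gamma_monic_in_y (w : ℝ) (hw : 1 < w) (a b c Γ : Poly2 ℂ)
    (h : IsAlgDOP 1 w a b c Γ)
    (hdeg : degreeOf 1 Γ = 2)
    (hnf : ∀ q : Polynomial ℂ, 0 < q.natDegree → ¬ (toX q ∣ Γ)) :
    ∃ k : ℂ, k ≠ 0 ∧ ∀ j : ℕ,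
      Γ.coeff (Finsupp.single 0 j + Finsupp.single 1 2) = if j = 0 then k else 0 := by
  obtain ⟨hwa, hwb, hwc, hΔ, hsf, hdvdΔ, hdvd1, hdvd2⟩ := h
  have hwpos : (0:ℝ) < w := by linarith
  -- weighted degree facts at the level of coefficients
  have key : ∀ (P : Poly2 ℂ) (D : ℝ), WDegLE 1 w P D → ∀ i j : ℕ,
      ((Φ P).coeff i).coeff j ≠ 0 → (j:ℝ) + w * i ≤ D := by
    intro P D hP i j hne
    have hmem : (Finsupp.single 0 j + Finsupp.single 1 i) ∈ P.support := by
      rw [MvPolynomial.mem_support_iff]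
      rwa [coeff_Φ] at hne
    have := hP _ hmem
    simpa [Finsupp.single_apply] using this
  -- y-degree bounds
  have hya : (Φ a).natDegree ≤ 1 := by
    refine Polynomial.natDegree_le_iff_coeff_eq_zero.mpr ?_
    intro N hN
    by_contra hne
    obtain ⟨j, hj⟩ : ∃ j, ((Φ a).coeff N).coeff j ≠ 0 := by
      by_contra hall; push_neg at hall
      exact hne (Polynomial.ext hall)
    have h1 := key a _ hwa N j hj
    have hN2 : (2:ℝ) ≤ (N:ℝ) := by exact_mod_cast hN
    have hj0 : (0:ℝ) ≤ (j:ℝ) := Nat.cast_nonneg j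
    nlinarith
  have hyb : (Φ b).natDegree ≤ 1 := by
    refine Polynomial.natDegree_le_iff_coeff_eq_zero.mpr ?_
    intro N hN
    by_contra hne
    obtain ⟨j, hj⟩ : ∃ j, ((Φ b).coeff N).coeff j ≠ 0 := by
      by_contra hall; push_neg at hall
      exact hne (Polynomial.ext hall)
    have h1 := key b _ hwb N j hj
    have hN2 : (2:ℝ) ≤ (N:ℝ) := by exact_mod_cast hN
    have hj0 : (0:ℝ) ≤ (j:ℝ) := Nat.cast_nonneg j
    nlinarith
  have hyc : (Φ c).natDegree ≤ 2 := by
    refine Polynomial.natDegree_le_iff_coeff_eq_zero.mpr ?_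
    intro N hN
    by_contra hne
    obtain ⟨j, hj⟩ : ∃ j, ((Φ c).coeff N).coeff j ≠ 0 := by
      by_contra hall; push_neg at hall
      exact hne (Polynomial.ext hall)
    have h1 := key c _ hwc N j hj
    have hN2 : (3:ℝ) ≤ (N:ℝ) := by exact_mod_cast hN
    have hj0 : (0:ℝ) ≤ (j:ℝ) := Nat.cast_nonneg j
    nlinarith
  -- exact y-degree of Γ
  have hΓne : Γ ≠ 0 := by
    intro h0; rw [h0] at hdeg; simp at hdeg
  have hyGle : (Φ Γ).natDegree ≤ 2 := by
    refine Polynomial.natDegree_le_iff_coeff_eq_zero.mpr ?_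
    intro N hN
    by_contra hne
    obtain ⟨j, hj⟩ : ∃ j, ((Φ Γ).coeff N).coeff j ≠ 0 := by
      by_contra hall; push_neg at hall
      exact hne (Polynomial.ext hall)
    have hmem : (Finsupp.single 0 j + Finsupp.single 1 N) ∈ Γ.support := by
      rw [MvPolynomial.mem_support_iff]; rwa [coeff_Φ] at hj
    have hle : (Finsupp.single 0 j + Finsupp.single 1 N : Fin 2 →₀ ℕ) 1 ≤ degreeOf 1 Γ := by
      rw [MvPolynomial.degreeOf_eq_sup]
      exact Finset.le_sup (f := fun m => m 1) hmem
    have : N ≤ 2 := by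
      rw [hdeg] at hle
      simpa [Finsupp.single_apply] using hle
    omega
  have hA_ne : (Φ Γ).coeff 2 ≠ 0 := by
    obtain ⟨m, hmem, hval⟩ := Finset.exists_mem_eq_sup Γ.support
      (MvPolynomial.support_nonempty.mpr hΓne) (fun m => m 1)
    have hm1 : m 1 = 2 := by
      rw [← hval, ← MvPolynomial.degreeOf_eq_sup, hdeg]
    intro h0
    have hco : ((Φ Γ).coeff 2).coeff (m 0) = Γ.coeff m := by
      rw [coeff_Φ]
      congr 1
      conv_rhs => rw [← fin2_eq m]
      rw [hm1]
    rw [h0] at hco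
    simp at hco
    exact MvPolynomial.mem_support_iff.mp hmem hco.symm
  have hGdeg : (Φ Γ).natDegree = 2 :=
    le_antisymm hyGle (Polynomial.le_natDegree_of_ne_zero hA_ne)
  have hPGne : Φ Γ ≠ 0 := fun h0 => hA_ne (by simp [h0])
  -- cofactors
  obtain ⟨u', hu'⟩ := hdvd1
  obtain ⟨v', hv'⟩ := hdvd2
  obtain ⟨g', hg'⟩ := hdvdΔ
  have EI : Φ a * Dx (Φ Γ) + Φ b * Polynomial.derivative (Φ Γ) = Φ Γ * Φ u' := by
    have e := congrArg Φ hu'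
    simp only [map_add, map_mul] at e
    rwa [Φ_pderiv0, Φ_pderiv1] at e
  have EII : Φ b * Dx (Φ Γ) + Φ c * Polynomial.derivative (Φ Γ) = Φ Γ * Φ v' := by
    have e := congrArg Φ hv'
    simp only [map_add, map_mul] at e
    rwa [Φ_pderiv0, Φ_pderiv1] at e
  have EΔ : Φ a * Φ c - (Φ b) ^ 2 = Φ Γ * Φ g' := by
    have e := congrArg Φ hg'
    simpa [map_sub, map_mul, map_pow] using e
  have hΔΦ : Φ a * Φ c - (Φ b) ^ 2 ≠ 0 := by
    intro h0
    apply hΔ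
    apply Φ_injective
    rw [map_sub, map_mul, map_pow, h0, map_zero]
  -- notation for coefficients
  set A := (Φ Γ).coeff 2 with hA_def
  set Bp := (Φ Γ).coeff 1 with hBp_def
  set Cp := (Φ Γ).coeff 0 with hCp_def
  set a0 := (Φ a).coeff 0 with ha0_def
  set a1 := (Φ a).coeff 1 with ha1_def
  set b0 := (Φ b).coeff 0 with hb0_def
  set b1 := (Φ b).coeff 1 with hb1_def
  set c0 := (Φ c).coeff 0 with hc0_def
  set c1 := (Φ c).coeff 1 with hc1_def
  set c2 := (Φ c).coeff 2 with hc2_def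
  set u0 := (Φ u').coeff 0 with hu0_def
  set u1 := (Φ u').coeff 1 with hu1_def
  set v0 := (Φ v').coeff 0 with hv0_def
  set h0 := (Φ g').coeff 0 with hh0_def
  by_cases hcase : A.natDegree = 0
  · -- Γ is monic in y up to constant: conclusion
    have hArepC : A = Polynomial.C (A.coeff 0) :=
      Polynomial.eq_C_of_natDegree_le_zero (le_of_eq hcase)
    refine ⟨A.coeff 0, ?_, ?_⟩
    · intro h0'
      rw [h0'] at hArepC
      simp at hArepC
      exact hA_ne hArepC
    · intro j
      have : Γ.coeff (Finsupp.single 0 j + Finsupp.single 1 2) = A.coeff j :=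
        (coeff_Φ Γ 2 j).symm
      rw [this, hArepC]
      by_cases hj : j = 0 <;> simp [hj, Polynomial.coeff_C]
  · exfalso
    have hdA : 1 ≤ A.natDegree := by omega
    have hAne : A ≠ 0 := hA_ne
    -- inner degree bounds
    have hdeg_a0 : a0.natDegree ≤ 2 := by
      refine Polynomial.natDegree_le_iff_coeff_eq_zero.mpr ?_
      intro N hN
      by_contra hne
      have h1 := key a _ hwa 0 N hne
      have : (N:ℝ) ≤ 2 := by push_cast at h1 ⊢; linarith
      have : N ≤ 2 := by exact_mod_cast this
      omega
    have hdeg_a1 : a1.natDegree = 0 := by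
      have hle : a1.natDegree ≤ 0 := by
        refine Polynomial.natDegree_le_iff_coeff_eq_zero.mpr ?_
        intro N hN
        by_contra hne
        have h1 := key a _ hwa 1 N hne
        have hN1 : (1:ℝ) ≤ (N:ℝ) := by exact_mod_cast hN
        push_cast at h1
        linarith
      omega
    have hdeg_b1 : b1.natDegree ≤ 1 := by
      refine Polynomial.natDegree_le_iff_coeff_eq_zero.mpr ?_
      intro N hN
      by_contra hne
      have h1 := key b _ hwb 1 N hne
      have hN1 : (2:ℝ) ≤ (N:ℝ) := by exact_mod_cast hN
      push_cast at h1
      linarith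
    have hdeg_c2 : c2.natDegree = 0 := by
      have hle : c2.natDegree ≤ 0 := by
        refine Polynomial.natDegree_le_iff_coeff_eq_zero.mpr ?_
        intro N hN
        by_contra hne
        have h1 := key c _ hwc 2 N hne
        have hN1 : (1:ℝ) ≤ (N:ℝ) := by exact_mod_cast hN
        push_cast at h1
        linarith
      omega
    -- degree bound for U
    have hU1 : (Φ u').natDegree ≤ 1 := by
      by_cases hU0 : Φ u' = 0
      · simp [hU0]
      have hLHS : (Φ a * Dx (Φ Γ) + Φ b * Polynomial.derivative (Φ Γ)).natDegree ≤ 3 := by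
        refine le_trans (Polynomial.natDegree_add_le _ _) ?_
        have l1 : (Φ a * Dx (Φ Γ)).natDegree ≤ 3 := by
          refine le_trans Polynomial.natDegree_mul_le ?_
          have := natDegree_Dx_le (Φ Γ)
          omega
        have l2 : (Φ b * Polynomial.derivative (Φ Γ)).natDegree ≤ 3 := by
          refine le_trans Polynomial.natDegree_mul_le ?_
          have := Polynomial.natDegree_derivative_le (Φ Γ)
          omega
        omega
      rw [EI, Polynomial.natDegree_mul hPGne hU0] at hLHS
      omega
    -- representations
    have hGrep : Φ Γ = Polynomial.C Cp + Polynomial.C Bp * Polynomial.X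
        + Polynomial.C A * Polynomial.X ^ 2 := rep2 _ (by omega)
    have hdxG : Dx (Φ Γ) = Polynomial.C (Polynomial.derivative Cp)
        + Polynomial.C (Polynomial.derivative Bp) * Polynomial.X
        + Polynomial.C (Polynomial.derivative A) * Polynomial.X ^ 2 := by
      rw [hGrep, dx_quad]
    have hdG : Polynomial.derivative (Φ Γ) = Polynomial.C Bp
        + Polynomial.C 2 * Polynomial.C A * Polynomial.X := by
      rw [hGrep, deriv_quad]
    have hArep : Φ a = Polynomial.C a0 + Polynomial.C a1 * Polynomial.X := rep1 _ hya
    have hbrep : Φ b = Polynomial.C b0 + Polynomial.C b1 * Polynomial.X := rep1 _ hyb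
    have hUrep : Φ u' = Polynomial.C u0 + Polynomial.C u1 * Polynomial.X := rep1 _ hU1
    -- extract F equations
    have EI' := EI
    rw [hdxG, hdG, hGrep, hArep, hbrep, hUrep] at EI'
    have EIc : (Polynomial.C a0 * Polynomial.C (Polynomial.derivative Cp)
          + Polynomial.C b0 * Polynomial.C Bp)
        + (Polynomial.C a0 * Polynomial.C (Polynomial.derivative Bp)
          + Polynomial.C a1 * Polynomial.C (Polynomial.derivative Cp)
          + Polynomial.C 2 * Polynomial.C b0 * Polynomial.C A
          + Polynomial.C b1 * Polynomial.C Bp) * Polynomial.X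
        + (Polynomial.C a0 * Polynomial.C (Polynomial.derivative A)
          + Polynomial.C a1 * Polynomial.C (Polynomial.derivative Bp)
          + Polynomial.C 2 * Polynomial.C b1 * Polynomial.C A) * Polynomial.X ^ 2
        + (Polynomial.C a1 * Polynomial.C (Polynomial.derivative A)) * Polynomial.X ^ 3
        = (Polynomial.C Cp * Polynomial.C u0)
        + (Polynomial.C Bp * Polynomial.C u0 + Polynomial.C Cp * Polynomial.C u1) * Polynomial.X
        + (Polynomial.C A * Polynomial.C u0 + Polynomial.C Bp * Polynomial.C u1) * Polynomial.X ^ 2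
        + (Polynomial.C A * Polynomial.C u1) * Polynomial.X ^ 3 := by
      linear_combination EI'
    simp only [← Polynomial.C_mul, ← Polynomial.C_add] at EIc
    rw [cubic_eq_iff] at EIc
    obtain ⟨F0a, F1a, F2a, F3a⟩ := EIc
    -- u1 = 0 and a1 = 0
    have hu1z : u1 = 0 := by
      by_contra hu1ne
      have hne2 : A * u1 ≠ 0 := mul_ne_zero hAne hu1ne
      have h1 : (a1 * Polynomial.derivative A).natDegree ≤ A.natDegree - 1 := by
        refine le_trans Polynomial.natDegree_mul_le ?_
        have := Polynomial.natDegree_derivative_le A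
        omega
      have h2 : (A * u1).natDegree = A.natDegree + u1.natDegree :=
        Polynomial.natDegree_mul hAne hu1ne
      rw [← F3a] at h2
      omega
    have ha1z : a1 = 0 := by
      have hz : a1 * Polynomial.derivative A = 0 := by rw [F3a, hu1z, mul_zero]
      rcases mul_eq_zero.mp hz with h' | h'
      · exact h'
      · exfalso
        have := Polynomial.natDegree_eq_zero_of_derivative_eq_zero h'
        omega
    have hArep0 : Φ a = Polynomial.C a0 := by rw [hArep, ha1z]; simp
    -- H is a nonzero constant
    have hHne : Φ g' ≠ 0 := by
      intro hH0; rw [hH0, mul_zero] at EΔ; exact hΔΦ EΔ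
    have hHdeg : (Φ g').natDegree = 0 := by
      have hL : (Φ a * Φ c - (Φ b) ^ 2).natDegree ≤ 2 := by
        refine le_trans (Polynomial.natDegree_sub_le _ _) ?_
        have l1 : (Φ a * Φ c).natDegree ≤ 2 := by
          refine le_trans Polynomial.natDegree_mul_le ?_
          have : (Φ a).natDegree ≤ 0 := by rw [hArep0]; simp
          omega
        have l2 : ((Φ b) ^ 2).natDegree ≤ 2 := by
          refine le_trans Polynomial.natDegree_pow_le ?_
          omega
        omega
      rw [EΔ, Polynomial.natDegree_mul hPGne hHne, hGdeg] at hL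
      omega
    have hHrep : Φ g' = Polynomial.C h0 :=
      Polynomial.eq_C_of_natDegree_le_zero (le_of_eq hHdeg)
    have hh0ne : h0 ≠ 0 := by
      intro h00; rw [h00] at hHrep; simp at hHrep; exact hHne hHrep
    -- extract D equations
    have hcrep : Φ c = Polynomial.C c0 + Polynomial.C c1 * Polynomial.X
        + Polynomial.C c2 * Polynomial.X ^ 2 := rep2 _ hyc
    have EΔ' := EΔ
    rw [hArep0, hcrep, hbrep, hGrep, hHrep] at EΔ'
    have EDc : (Polynomial.C a0 * Polynomial.C c0 - Polynomial.C b0 * Polynomial.C b0)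
        + (Polynomial.C a0 * Polynomial.C c1
          - Polynomial.C 2 * Polynomial.C b0 * Polynomial.C b1) * Polynomial.X
        + (Polynomial.C a0 * Polynomial.C c2
          - Polynomial.C b1 * Polynomial.C b1) * Polynomial.X ^ 2
        + (Polynomial.C (0:RR)) * Polynomial.X ^ 3
        = (Polynomial.C Cp * Polynomial.C h0)
        + (Polynomial.C Bp * Polynomial.C h0) * Polynomial.X
        + (Polynomial.C A * Polynomial.C h0) * Polynomial.X ^ 2
        + (Polynomial.C (0:RR)) * Polynomial.X ^ 3 := by
      have hC2 : (Polynomial.C (2:RR) : Polynomial RR) = 2 := map_ofNat Polynomial.C 2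
      linear_combination EΔ' - Polynomial.C b0 * Polynomial.C b1 * Polynomial.X * hC2
    simp only [← Polynomial.C_mul, ← Polynomial.C_add, ← Polynomial.C_sub] at EDc
    rw [cubic_eq_iff] at EDc
    obtain ⟨D0a, D1a, D2a, -⟩ := EDc
    -- Y0
    have EYw : Φ Γ * (Φ g' * Polynomial.derivative (Φ Γ))
        = Φ Γ * (Φ a * Φ v' - Φ b * Φ u') := by
      linear_combination Φ a * EII - Φ b * EI - Polynomial.derivative (Φ Γ) * EΔ
    have EY := mul_left_cancel₀ hPGne EYw
    have Y0 : h0 * Bp = a0 * v0 - b0 * u0 := by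
      have e := congrArg (fun P => Polynomial.coeff P 0) EY
      simp only [Polynomial.mul_coeff_zero, Polynomial.coeff_sub,
        Polynomial.coeff_derivative] at e
      rw [hHrep, hArep0] at e
      simp at e
      linear_combination e
    -- a0 ≠ 0
    have ha0ne : a0 ≠ 0 := by
      intro h00
      have haz : a = 0 := by
        apply Φ_injective
        rw [hArep0, h00, map_zero, map_zero]
      have hbne : b ≠ 0 := by
        intro hb0; apply hΔ; rw [haz, hb0]; ring
      have hb2 : Γ ∣ b ^ 2 := by
        refine ⟨-g', ?_⟩
        have : a * c - b ^ 2 = Γ * g' := hg'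
        rw [haz] at this
        linear_combination -this
      have hbb : Γ ∣ b := (hsf.dvd_pow_iff_dvd two_ne_zero).mp hb2
      have hPbne : Φ b ≠ 0 := by
        intro hb0; exact hbne (Φ_injective (by rw [hb0, map_zero]))
      have := Polynomial.natDegree_le_of_dvd (map_dvd Φ hbb) hPbne
      omega
    -- no common root of A, Bp, Cp
    have hnf' : ∀ r : ℂ, ¬(A.eval r = 0 ∧ Bp.eval r = 0 ∧ Cp.eval r = 0) := by
      rintro r ⟨e2, e1, e0⟩
      have hq : ∀ i, (Polynomial.X - Polynomial.C r) ∣ (Φ Γ).coeff i := by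
        intro i
        match i with
        | 0 => exact Polynomial.dvd_iff_isRoot.mpr e0
        | 1 => exact Polynomial.dvd_iff_isRoot.mpr e1
        | 2 => exact Polynomial.dvd_iff_isRoot.mpr e2
        | (i+3) =>
          rw [Polynomial.coeff_eq_zero_of_natDegree_lt (by omega)]
          exact dvd_zero _
      have hdvdG := dvd_toX_of_dvd_coeffs _ _ hq
      exact hnf _ (by simp) hdvdG
    -- invoke the main computation
    exact partB A Bp Cp a0 b0 b1 c0 c1 c2 u0 v0 h0 hdA ha0ne hh0ne hdeg_a0 hdeg_b1 hdeg_c2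
      (by linear_combination F2a - Polynomial.derivative Bp * ha1z + Bp * hu1z)
      (by linear_combination F1a - Polynomial.derivative Cp * ha1z + Cp * hu1z)
      (by linear_combination F0a)
      (by linear_combination D2a)
      (by linear_combination D1a)
      (by linear_combination D0a)
      Y0 hnf'
end
end

section
/- Let w > 2 be real, let p ∈ ℂ[x], let Γ = y² − p(x), and let (g,Γ) with g = [[a,b],[b,c]] be a solution of the (1,w)-AlgDOP problem over ℂ. Then a and c are even with respect to y and b is odd with respect to y: a(x,−y) = a(x,y), c(x,−y) = c(x,y), and b(x,−y) = −b(x,y) (equivalently, the coefficient of y⁰ in b and the coefficient of y¹ in c both vanish). -/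
open MvPolynomial

noncomputable section

/-- The substitution `(x,y) ↦ (x,−y)`. -/
def negY {K : Type*} [CommRing K] : Poly2 K →ₐ[K] Poly2 K :=
  MvPolynomial.aeval (fun i : Fin 2 => if i = 0 then X 0 else - X 1)

namespace SymAux

/-- The equivalence sending `X 1` to the outer `Polynomial.X`. -/
def E : Poly2 ℂ ≃ₐ[ℂ] Polynomial (MvPolynomial (Fin 1) ℂ) :=
  (renameEquiv ℂ (Equiv.swap (0 : Fin 2) 1)).trans (finSuccEquiv ℂ 1)

lemma E_X1 : E (X 1) = Polynomial.X := by
  simp [E, finSuccEquiv_X_zero]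

lemma E_X0 : E (X 0) = Polynomial.C (X 0) := by
  have h : ((1 : Fin 2)) = Fin.succ 0 := rfl
  simp only [E, AlgEquiv.trans_apply, renameEquiv_apply, rename_X, Equiv.swap_apply_left, h,
    finSuccEquiv_X_succ]

lemma E_toX (q : Polynomial ℂ) :
    E (toX q) = Polynomial.C (Polynomial.aeval (X 0 : MvPolynomial (Fin 1) ℂ) q) := by
  have h1 : E (toX q) = Polynomial.aeval (E (X 0)) q := by
    show E ((Polynomial.aeval (X 0)) q) = _
    exact (Polynomial.aeval_algHom_apply E (X 0) q).symm
  rw [h1, E_X0]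
  have h2 := (Polynomial.aeval_algHom_apply (Polynomial.CAlgHom : MvPolynomial (Fin 1) ℂ →ₐ[ℂ] _)
    (X 0) q)
  simpa [Polynomial.CAlgHom] using h2

lemma toX_add (f g : Polynomial ℂ) : toX (f + g) = toX f + toX g :=
  map_add (Polynomial.aeval (X 0) : Polynomial ℂ →ₐ[ℂ] Poly2 ℂ) f g

lemma toX_monomial (n : ℕ) (r : ℂ) :
    toX (Polynomial.monomial n r) = monomial (Finsupp.single 0 n) r := by
  simp [toX, Polynomial.aeval_monomial, X_pow_eq_monomial, C_mul_monomial, algebraMap_eq]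

lemma pderiv0_toX (q : Polynomial ℂ) : pderiv 0 (toX q) = toX (Polynomial.derivative q) := by
  induction q using Polynomial.induction_on' with
  | add f g hf hg =>
    rw [toX_add, map_add, hf, hg, Polynomial.derivative_add, toX_add]
  | monomial n r =>
    rw [toX_monomial, pderiv_monomial, Polynomial.derivative_monomial, toX_monomial]
    simp [Finsupp.single_tsub]

lemma pderiv1_toX (q : Polynomial ℂ) : pderiv 1 (toX q) = 0 := by
  induction q using Polynomial.induction_on' with
  | add f g hf hg => rw [toX_add, map_add, hf, hg, add_zero]
  | monomial n r =>
    rw [toX_monomial, pderiv_monomial]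
    simp [Finsupp.single_apply]

lemma natDegree_E (P : Poly2 ℂ) : (E P).natDegree = degreeOf 1 P := by
  show ((finSuccEquiv ℂ 1) (rename (Equiv.swap (0:Fin 2) 1) P)).natDegree = _
  rw [natDegree_finSuccEquiv]
  rw [show (0 : Fin 2) = (Equiv.swap (0:Fin 2) 1) 1 from (Equiv.swap_apply_right 0 1).symm]
  exact degreeOf_rename_of_injective (Equiv.injective _) 1

lemma squarefree_map {A B : Type*} [Monoid A] [Monoid B] (e : A ≃* B) {x : A}
    (h : Squarefree x) : Squarefree (e x) := by
  intro y hy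
  have h2 : e.symm y * e.symm y ∣ x := by
    have := map_dvd e.symm hy
    simpa using this
  have := h _ h2
  simpa using this.map e

lemma squarefree_E {x : Poly2 ℂ} (h : Squarefree x) : Squarefree (E x) := by
  intro y hy
  have h2 : E.symm y * E.symm y ∣ x := by
    have := map_dvd E.symm hy
    simpa using this
  have h3 := (h _ h2).map E
  simpa using h3

lemma eq_quad {R : Type*} [CommRing R] (f : Polynomial R) (hf : f.natDegree ≤ 2) :
    f = Polynomial.C (f.coeff 2) * Polynomial.X ^ 2 + Polynomial.C (f.coeff 1) * Polynomial.X
      + Polynomial.C (f.coeff 0) := by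
  ext n
  match n with
  | 0 => simp
  | 1 => simp
  | 2 => simp
  | (n+3) =>
    have h3 : f.natDegree < n + 3 := by omega
    rw [Polynomial.coeff_eq_zero_of_natDegree_lt h3]
    simp [Polynomial.coeff_X_pow, Polynomial.coeff_C]

/-- The map `X ↦ -X` on `Polynomial (MvPolynomial (Fin 1) ℂ)`. -/
def N : Polynomial (MvPolynomial (Fin 1) ℂ) →ₐ[ℂ] Polynomial (MvPolynomial (Fin 1) ℂ) :=
  Polynomial.aevalTower Polynomial.CAlgHom (-Polynomial.X)

lemma N_C (x : MvPolynomial (Fin 1) ℂ) : N (Polynomial.C x) = Polynomial.C x := by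
  simp [N, Polynomial.aevalTower_C, Polynomial.CAlgHom]

lemma N_X : N Polynomial.X = -Polynomial.X := Polynomial.aevalTower_X _ _

lemma negY_X0 : negY (X 0 : Poly2 ℂ) = X 0 := by
  show (MvPolynomial.aeval fun i : Fin 2 => if i = 0 then X 0 else - X 1) (X 0 : Poly2 ℂ) = X 0
  rw [aeval_X, if_pos rfl]

lemma negY_X1 : negY (X 1 : Poly2 ℂ) = - X 1 := by
  show (MvPolynomial.aeval fun i : Fin 2 => if i = 0 then X 0 else - X 1) (X 1 : Poly2 ℂ) = - X 1
  rw [aeval_X, if_neg (by decide)]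

lemma negY_C (r : ℂ) : negY (C r : Poly2 ℂ) = C r := by
  show (MvPolynomial.aeval fun i : Fin 2 => if i = 0 then X 0 else - X 1) (C r : Poly2 ℂ) = C r
  rw [aeval_C, algebraMap_eq]

lemma E_C (r : ℂ) : E (C r) = Polynomial.C (MvPolynomial.C r) := by
  have h1 := E.commutes r
  rw [algebraMap_eq] at h1
  rw [h1]
  rfl

lemma E_negY_X (i : Fin 2) : E (negY (X i)) = N (E (X i)) := by
  fin_cases i
  · show E (negY (X 0)) = N (E (X 0))
    rw [negY_X0, E_X0, N_C]
  · show E (negY (X 1)) = N (E (X 1))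
    rw [negY_X1, map_neg, E_X1, N_X]

lemma E_negY (P : Poly2 ℂ) : E (negY P) = N (E P) := by
  induction P using MvPolynomial.induction_on with
  | C r => rw [negY_C, E_C, N_C]
  | add p q hp hq => simp only [map_add, hp, hq]
  | mul_X p i hp => simp only [map_mul, hp, E_negY_X]

end SymAux

theorem SymAux.main (w : ℝ) (hw : 2 < w) (p : Polynomial ℂ) (a b c : Poly2 ℂ)
    (hwa : ∀ m ∈ a.support, 1 * (m 0 : ℝ) + w * (m 1 : ℝ) ≤ 2 * 1)
    (hwb : ∀ m ∈ b.support, 1 * (m 0 : ℝ) + w * (m 1 : ℝ) ≤ 1 + w)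
    (hwc : ∀ m ∈ c.support, 1 * (m 0 : ℝ) + w * (m 1 : ℝ) ≤ 2 * w)
    (hsf : Squarefree (X 1 ^ 2 - toX p))
    (h1 : (X 1 ^ 2 - toX p) ∣ (a * pderiv 0 (X 1 ^ 2 - toX p) + b * pderiv 1 (X 1 ^ 2 - toX p)))
    (h2 : (X 1 ^ 2 - toX p) ∣ (b * pderiv 0 (X 1 ^ 2 - toX p) + c * pderiv 1 (X 1 ^ 2 - toX p))) :
    negY a = a ∧ negY c = c ∧ negY b = -b := by
  have hw0 : (0:ℝ) < w := by linarith
  -- degree bounds in y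
  have ha : degreeOf 1 a = 0 := by
    refine Nat.le_zero.mp (degreeOf_le_iff.mpr fun m hm => ?_)
    by_contra hc
    have h1m : (1:ℝ) ≤ (m 1 : ℝ) := by exact_mod_cast Nat.one_le_iff_ne_zero.mpr (by omega)
    have hq := hwa m hm
    have h0 : (0:ℝ) ≤ (m 0 : ℝ) := Nat.cast_nonneg _
    nlinarith
  have hb : degreeOf 1 b ≤ 1 := by
    refine degreeOf_le_iff.mpr fun m hm => ?_
    by_contra hc
    have h1m : (2:ℝ) ≤ (m 1 : ℝ) := by exact_mod_cast (by omega : 2 ≤ m 1)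
    have hq := hwb m hm
    have h0 : (0:ℝ) ≤ (m 0 : ℝ) := Nat.cast_nonneg _
    nlinarith
  have hcdeg : degreeOf 1 c ≤ 2 := by
    refine degreeOf_le_iff.mpr fun m hm => ?_
    by_contra hc
    have h1m : (3:ℝ) ≤ (m 1 : ℝ) := by exact_mod_cast (by omega : 3 ≤ m 1)
    have hq := hwc m hm
    have h0 : (0:ℝ) ≤ (m 0 : ℝ) := Nat.cast_nonneg _
    nlinarith
  -- transfer to Polynomial world
  set π : MvPolynomial (Fin 1) ℂ := Polynomial.aeval (X 0 : MvPolynomial (Fin 1) ℂ) p with hπ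
  set δ : MvPolynomial (Fin 1) ℂ :=
    Polynomial.aeval (X 0 : MvPolynomial (Fin 1) ℂ) (Polynomial.derivative p) with hδ
  set G : Polynomial (MvPolynomial (Fin 1) ℂ) := Polynomial.X ^ 2 - Polynomial.C π with hG
  have hEΓ : SymAux.E (X 1 ^ 2 - toX p) = G := by
    rw [map_sub, map_pow, SymAux.E_X1, SymAux.E_toX]
  have hGdeg : G.degree = 2 := Polynomial.degree_X_pow_sub_C (by norm_num) π
  have hπne : π ≠ 0 := by
    intro hpi
    have hsfG : Squarefree G := hEΓ ▸ SymAux.squarefree_E hsf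
    rw [hG, hpi, map_zero, sub_zero] at hsfG
    exact Polynomial.not_isUnit_X (hsfG Polynomial.X (by rw [← sq]))
  -- partial derivatives
  have hp1 : pderiv 1 (X 1 ^ 2 - toX p : Poly2 ℂ) = 2 * X 1 := by
    rw [map_sub, SymAux.pderiv1_toX, sub_zero, pow_two]
    rw [pderiv_mul, pderiv_X_self]
    ring
  have hp0 : pderiv 0 (X 1 ^ 2 - toX p : Poly2 ℂ) = - toX (Polynomial.derivative p) := by
    have hx : (pderiv 0) (X 1 : Poly2 ℂ) = 0 := pderiv_X_of_ne (by decide)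
    rw [map_sub, SymAux.pderiv0_toX, pow_two, pderiv_mul, hx]
    ring
  set A := SymAux.E a with hAdef
  set B := SymAux.E b with hBdef
  set Cc := SymAux.E c with hCdef
  have hA : A = Polynomial.C (A.coeff 0) :=
    Polynomial.eq_C_of_natDegree_eq_zero (by rw [hAdef, SymAux.natDegree_E, ha])
  have hB : B = Polynomial.C (B.coeff 1) * Polynomial.X + Polynomial.C (B.coeff 0) :=
    Polynomial.eq_X_add_C_of_natDegree_le_one (by rw [hBdef, SymAux.natDegree_E]; exact hb)
  have hC : Cc = Polynomial.C (Cc.coeff 2) * Polynomial.X ^ 2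
      + Polynomial.C (Cc.coeff 1) * Polynomial.X + Polynomial.C (Cc.coeff 0) :=
    SymAux.eq_quad Cc (by rw [hCdef, SymAux.natDegree_E]; exact hcdeg)
  set α := A.coeff 0 with hα
  set β1 := B.coeff 1 with hβ1
  set β0 := B.coeff 0 with hβ0d
  set γ2 := Cc.coeff 2 with hγ2
  set γ1 := Cc.coeff 1 with hγ1d
  set γ0 := Cc.coeff 0 with hγ0
  -- first divisibility relation
  have d1 : G ∣ A * (- Polynomial.C δ) + B * (2 * Polynomial.X) := by
    have hd := map_dvd SymAux.E h1
    rw [hEΓ, map_add, map_mul, map_mul, hp0, hp1, map_neg, SymAux.E_toX, map_mul,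
      SymAux.E_X1, map_ofNat] at hd
    exact hd
  have d1' : G ∣ Polynomial.C (2 * β1 * π - α * δ) + Polynomial.C (2 * β0) * Polynomial.X := by
    have key : Polynomial.C (2 * β1 * π - α * δ) + Polynomial.C (2 * β0) * Polynomial.X
        = (A * (- Polynomial.C δ) + B * (2 * Polynomial.X)) - Polynomial.C (2 * β1) * G := by
      rw [hA, hB, hG]
      simp only [map_mul, map_sub, map_add, map_ofNat]
      ring
    rw [key]
    exact dvd_sub d1 (dvd_mul_left G _)
  have hr1 : Polynomial.C (2 * β1 * π - α * δ) + Polynomial.C (2 * β0) * Polynomial.X = 0 := by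
    refine Polynomial.eq_zero_of_dvd_of_degree_lt d1' ?_
    rw [hGdeg]
    refine lt_of_le_of_lt ?_ (by norm_num : (1 : WithBot ℕ) < 2)
    rw [add_comm]
    exact Polynomial.degree_linear_le
  have hβ0 : β0 = 0 := by
    have hco := congrArg (fun f => Polynomial.coeff f 1) hr1
    simp [Polynomial.coeff_C] at hco
    exact hco
  -- second divisibility relation
  have d2 : G ∣ B * (- Polynomial.C δ) + Cc * (2 * Polynomial.X) := by
    have hd := map_dvd SymAux.E h2
    rw [hEΓ, map_add, map_mul, map_mul, hp0, hp1, map_neg, SymAux.E_toX, map_mul,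
      SymAux.E_X1, map_ofNat] at hd
    exact hd
  have d2' : G ∣ Polynomial.C (2 * γ0 + 2 * γ2 * π - β1 * δ) * Polynomial.X
      + Polynomial.C (2 * γ1 * π - β0 * δ) := by
    have key : Polynomial.C (2 * γ0 + 2 * γ2 * π - β1 * δ) * Polynomial.X
        + Polynomial.C (2 * γ1 * π - β0 * δ)
        = (B * (- Polynomial.C δ) + Cc * (2 * Polynomial.X))
          - (Polynomial.C (2 * γ2) * Polynomial.X + Polynomial.C (2 * γ1)) * G := by
      rw [hB, hC, hG]
      simp only [map_mul, map_sub, map_add, map_ofNat]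
      ring
    rw [key]
    exact dvd_sub d2 (dvd_mul_left G _)
  have hr2 : Polynomial.C (2 * γ0 + 2 * γ2 * π - β1 * δ) * Polynomial.X
      + Polynomial.C (2 * γ1 * π - β0 * δ) = 0 := by
    refine Polynomial.eq_zero_of_dvd_of_degree_lt d2' ?_
    rw [hGdeg]
    exact lt_of_le_of_lt Polynomial.degree_linear_le (by norm_num : (1 : WithBot ℕ) < 2)
  have hγ1 : γ1 = 0 := by
    have hco := congrArg (fun f => Polynomial.coeff f 0) hr2
    simp [Polynomial.coeff_C, hβ0] at hco
    rcases hco with hco | hco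
    · exact hco
    · exact absurd hco hπne
  -- conclusion
  refine ⟨?_, ?_, ?_⟩
  · apply SymAux.E.injective
    rw [SymAux.E_negY, ← hAdef, hA, SymAux.N_C]
  · apply SymAux.E.injective
    rw [SymAux.E_negY, ← hCdef, hC, hγ1]
    simp only [Polynomial.C_0, zero_mul, add_zero, map_add, map_mul, map_pow, SymAux.N_C,
      SymAux.N_X]
    ring
  · apply SymAux.E.injective
    rw [SymAux.E_negY, map_neg, ← hBdef, hB, hβ0]
    simp only [Polynomial.C_0, add_zero, map_add, map_mul, SymAux.N_C, SymAux.N_X]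
    ring


/-- Lemma 4.2: if `Γ = y² − p(x)` and `(g,Γ)` is a solution of the `(1,w)`-AlgDOP
problem over `ℂ` with `w > 2`, then `a` and `c` are even in `y` and `b` is odd
in `y`. -/
theorem symmetry_of_metric (w : ℝ) (hw : 2 < w) (p : Polynomial ℂ) (a b c : Poly2 ℂ)
    (h : IsAlgDOP 1 w a b c (X 1 ^ 2 - toX p)) :
    negY a = a ∧ negY c = c ∧ negY b = -b := by
  obtain ⟨hwa, hwb, hwc, hΔ, hsf, hdvd0, h1, h2⟩ := h
  exact SymAux.main w hw p a b c hwa hwb hwc hsf h1 h2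
end
end
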